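/- arXiv:0708.3499 — 8 statements merged into one kernel-verified Lean document; each statement's English description precedes it below -/
import Mathlib

section
/- Let N be a directed acyclic graph. If v is a tree descendant of u (i.e., there is a tree path from u to v), then v is a strict descendant of u (every path from a root of N to v contains u), and moreover the directed path from u to v is unique. -/
/-- Acyclicity of a directed graph given by a Boolean adjacency function. -/
def Acyclic {V : Type*} (E : V → V → Bool) : Prop :=
  ∀ v : V, ¬ Relation.TransGen (fun a b => E a b = true) v v

/-- `p` is a directed path from `u` to `v`: a nonempty list of nodes starting
at `u`, ending at `v`, with consecutive nodes joined by arcs. -/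
def IsWalk {V : Type*} (E : V → V → Bool) (u v : V) (p : List V) : Prop :=
  p.head? = some u ∧ p.getLast? = some v ∧ p.Chain' (fun a b => E a b = true)

/-- There is a directed path (possibly trivial) from `u` to `v`: the path ordering. -/
def Reaches {V : Type*} (E : V → V → Bool) (u v : V) : Prop :=
  ∃ p, IsWalk E u v p

/-- The in-degree of a node. -/
def inDeg {V : Type*} [Fintype V] (E : V → V → Bool) (v : V) : ℕ :=
  (Finset.univ.filter (fun u => E u v = true)).card

/-- The out-degree of a node. -/
def outDeg {V : Type*} [Fintype V] (E : V → V → Bool) (u : V) : ℕ :=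
  (Finset.univ.filter (fun v => E u v = true)).card

/-- A tree path from `u` to `v`: a non-trivial directed path whose end and all
intermediate nodes are tree nodes (in-degree at most 1). -/
def IsTreePath {V : Type*} [Fintype V] (E : V → V → Bool) (u v : V) (p : List V) : Prop :=
  IsWalk E u v p ∧ 2 ≤ p.length ∧ ∀ w ∈ p.tail, inDeg E w ≤ 1

/-- `v` is a strict descendant of `u`: `v` is a descendant of `u` and every directed
path from a root (a node of in-degree 0) to `v` contains `u`. -/
def StrictDescendant {V : Type*} [Fintype V] (E : V → V → Bool) (u v : V) : Prop :=
  Reaches E u v ∧ ∀ (r : V) (p : List V), inDeg E r = 0 → IsWalk E r v p → u ∈ p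

section Aux

variable {V : Type*}

lemma isWalk_decomp' (E : V → V → Bool) {a b : V} {p : List V} (h : IsWalk E a b p) :
    (p = [a] ∧ b = a) ∨ ∃ c q, IsWalk E a c q ∧ E c b = true ∧ p = q ++ [b] := by
  obtain ⟨h1, h2, h3⟩ := h
  rcases List.eq_nil_or_concat p with rfl | ⟨l, x, rfl⟩
  · simp at h1
  · simp only [List.concat_eq_append] at h1 h2 h3 ⊢
    have hx : x = b := by simpa [List.getLast?_concat] using h2
    subst hx
    rcases eq_or_ne l [] with rfl | hl
    · left
      simp at h1
      simp [h1]
    · right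
      have hch := List.isChain_append.mp h3
      refine ⟨l.getLast hl, l, ⟨?_, ?_, hch.1⟩, ?_, rfl⟩
      · rwa [List.head?_append_of_ne_nil _ hl] at h1
      · exact List.getLast?_eq_getLast hl ▸ rfl
      · exact hch.2.2 _ (List.getLast?_eq_getLast hl) x rfl

lemma isWalk_concat' (E : V → V → Bool) {a c : V} {q : List V} (h : IsWalk E a c q)
    (b : V) (hb : E c b = true) : IsWalk E a b (q ++ [b]) := by
  obtain ⟨h1, h2, h3⟩ := h
  have hq : q ≠ [] := by rintro rfl; simp at h1
  refine ⟨by rwa [List.head?_append_of_ne_nil _ hq], by simp [List.getLast?_concat], ?_⟩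
  refine List.isChain_append.mpr ⟨h3, List.isChain_singleton _, ?_⟩
  intro x hx y hy
  simp at hy
  subst hy
  rw [h2] at hx
  cases hx
  exact hb

lemma isWalk_rtg (E : V → V → Bool) :
    ∀ n (p : List V) (a b : V), p.length ≤ n → IsWalk E a b p →
      Relation.ReflTransGen (fun x y => E x y = true) a b := by
  intro n
  induction n with
  | zero =>
    intro p a b hl h
    have : p = [] := List.eq_nil_of_length_eq_zero (Nat.le_zero.mp hl)
    subst this; simp [IsWalk] at h
  | succ n ih =>
    intro p a b hl h
    rcases isWalk_decomp' E h with ⟨rfl, rfl⟩ | ⟨c, q, hq, he, rfl⟩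
    · exact Relation.ReflTransGen.refl
    · have hql : q.length ≤ n := by simp [List.length_append] at hl; omega
      exact (ih q a c hql hq).tail he

lemma isWalk_tg (E : V → V → Bool) {p : List V} {a b : V} (hl : 2 ≤ p.length)
    (h : IsWalk E a b p) : Relation.TransGen (fun x y => E x y = true) a b := by
  rcases isWalk_decomp' E h with ⟨rfl, rfl⟩ | ⟨c, q, hq, he, rfl⟩
  · simp at hl
  · exact Relation.TransGen.tail' (isWalk_rtg E q.length q a c le_rfl hq) he

lemma walk_self (E : V → V → Bool) (hac : Acyclic E) {p : List V} {a : V}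
    (h : IsWalk E a a p) : p = [a] := by
  rcases isWalk_decomp' E h with ⟨rfl, _⟩ | ⟨c, q, hq, he, rfl⟩
  · rfl
  · exact absurd (Relation.TransGen.tail' (isWalk_rtg E q.length q a c le_rfl hq) he) (hac a)

lemma pred_unique [Fintype V] {E : V → V → Bool} {v a b : V} (h : inDeg E v ≤ 1)
    (ha : E a v = true) (hb : E b v = true) : a = b :=
  Finset.card_le_one.mp h a (by simp [ha]) b (by simp [hb])

lemma inDeg_pos [Fintype V] {E : V → V → Bool} {a v : V} (ha : E a v = true) :
    inDeg E v ≠ 0 := by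
  have : a ∈ Finset.univ.filter (fun u => E u v = true) := by simp [ha]
  exact Finset.card_ne_zero_of_mem this

end Aux

lemma main_lemma {V : Type*} [Fintype V] (E : V → V → Bool) (hac : Acyclic E) :
    ∀ n (p : List V) (u v : V), p.length ≤ n → IsTreePath E u v p →
      (∀ r s, inDeg E r = 0 → IsWalk E r v s → u ∈ s) ∧
      (∀ p₁ p₂, IsWalk E u v p₁ → IsWalk E u v p₂ → p₁ = p₂) := by
  intro n
  induction n with
  | zero =>
    intro p u v hl ht
    have := ht.2.1
    omega
  | succ n ih =>
    intro p u v hl ht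
    obtain ⟨hw, hlen, htail⟩ := ht
    rcases isWalk_decomp' E hw with ⟨rfl, rfl⟩ | ⟨w, q, hq, he, rfl⟩
    · simp at hlen
    · have hqne : q ≠ [] := by rintro rfl; exact absurd hq.1 (by simp)
      have hvtail : v ∈ (q ++ [v]).tail := by
        cases q with
        | nil => exact absurd rfl hqne
        | cons x xs => simp
      have hdeg : inDeg E v ≤ 1 := htail v hvtail
      have htailsub : ∀ w' ∈ q.tail, w' ∈ (q ++ [v]).tail := by
        intro w' hw'
        cases q with
        | nil => simp at hw'
        | cons x xs => simp at hw' ⊢; exact Or.inl hw'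
      have hql : q.length ≤ n := by simp [List.length_append] at hl; omega
      have key : w = u ∨ IsTreePath E u w q := by
        by_cases h2 : 2 ≤ q.length
        · exact Or.inr ⟨hq, h2, fun x hx => htail x (htailsub x hx)⟩
        · left
          have h1 : q.length = 1 := by
            have : q.length ≠ 0 := fun h => hqne (List.eq_nil_of_length_eq_zero h)
            omega
          obtain ⟨x, rfl⟩ := List.length_eq_one_iff.mp h1
          have hxu : x = u := by simpa using hq.1
          have hxw : x = w := by simpa using hq.2.1
          rw [← hxu, hxw]
      constructor
      · intro r s hr hs
        have hvr : v ≠ r := fun h => (inDeg_pos he) (h ▸ hr)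
        rcases isWalk_decomp' E hs with ⟨rfl, rfl⟩ | ⟨w', t, ht', he', rfl⟩
        · exact absurd rfl hvr
        · rw [pred_unique hdeg he' he] at ht'
          rcases key with rfl | htp
          · obtain ⟨hne, heq⟩ := List.mem_getLast?_eq_getLast ht'.2.1
            exact List.mem_append.mpr (Or.inl (heq ▸ List.getLast_mem hne))
          · exact List.mem_append.mpr (Or.inl ((ih q u w hql htp).1 r t hr ht'))
      · intro p₁ p₂ h₁ h₂
        have huv : u ≠ v := by
          rintro rfl
          exact absurd (isWalk_tg E hlen hw) (hac u)
        have dec : ∀ p', IsWalk E u v p' → ∃ t, IsWalk E u w t ∧ p' = t ++ [v] := by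
          intro p' h'
          rcases isWalk_decomp' E h' with ⟨rfl, rfl⟩ | ⟨w', t, ht', he', rfl⟩
          · exact absurd rfl huv.symm
          · rw [pred_unique hdeg he' he] at ht'
            exact ⟨t, ht', rfl⟩
        obtain ⟨t₁, ht₁, rfl⟩ := dec p₁ h₁
        obtain ⟨t₂, ht₂, rfl⟩ := dec p₂ h₂
        rcases key with rfl | htp
        · rw [walk_self E hac ht₁, walk_self E hac ht₂]
        · rw [(ih q u w hql htp).2 t₁ t₂ ht₁ ht₂]

/-- In a DAG, if `v` is a tree descendant of `u` then `v` is a strict descendant of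
`u`, and the directed path from `u` to `v` is unique. -/
theorem treeDescendant_strictDescendant_and_unique_path {V : Type*} [Fintype V]
    (E : V → V → Bool) (hac : Acyclic E) (u v : V)
    (h : ∃ p, IsTreePath E u v p) :
    StrictDescendant E u v ∧
      ∀ p₁ p₂ : List V, IsWalk E u v p₁ → IsWalk E u v p₂ → p₁ = p₂ := by
  obtain ⟨p, ht⟩ := h
  obtain ⟨hstrict, huniq⟩ := main_lemma E hac p.length p u v le_rfl ht
  exact ⟨⟨⟨p, ht.1⟩, hstrict⟩, huniq⟩
end

section
/- For every phylogenetic network N=(V,E), the following three conditions are equivalent: (a) N is tree-child, i.e., every internal node has at least one child that is a tree node; (b) every internal node v has at least one leaf among its tree descendants (T_L(v) ≠ ∅); (c) every node v has at least one leaf among its strict descendants (A_L(v) ≠ ∅). -/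
/-- A phylogenetic network on the label set `{1,…,n}`: a rooted DAG (exactly one root)
whose leaves (nodes of out-degree 0) are bijectively labeled by `Fin n`. -/
structure PhyloNetwork (V : Type*) [Fintype V] (n : ℕ) where
  E : V → V → Bool
  acyclic : Acyclic E
  rooted : ∃! r : V, inDeg E r = 0
  leaf : Fin n → V
  leaf_isLeaf : ∀ i, outDeg E (leaf i) = 0
  leaf_inj : Function.Injective leaf
  leaf_surj : ∀ v, outDeg E v = 0 → ∃ i, leaf i = v

/-- A phylogenetic network is tree-child when every internal node has at least one
child that is a tree node (in-degree at most 1). -/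
def TreeChild {V : Type*} [Fintype V] {n : ℕ} (N : PhyloNetwork V n) : Prop :=
  ∀ u : V, 0 < outDeg N.E u → ∃ v : V, N.E u v = true ∧ inDeg N.E v ≤ 1

namespace TCProof

variable {V : Type*}

inductive W (E : V → V → Bool) : V → V → List V → Prop
  | single (u : V) : W E u u [u]
  | cons {u w v : V} {p : List V} (h : E u w = true) (hp : W E w v p) : W E u v (u :: p)

theorem W.head_eq {E : V → V → Bool} {u v : V} {p : List V} (h : W E u v p) :
    ∃ t, p = u :: t := by
  cases h with
  | single => exact ⟨[], rfl⟩
  | cons h hp => exact ⟨_, rfl⟩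

theorem W.last_mem {E : V → V → Bool} {u v : V} {p : List V} (h : W E u v p) : v ∈ p := by
  induction h with
  | single u => simp
  | cons h hp ih => exact List.mem_cons_of_mem _ ih

theorem isWalk_w {E : V → V → Bool} :
    ∀ (p : List V) (u v : V), p.head? = some u → p.getLast? = some v →
      p.Chain' (fun a b => E a b = true) → W E u v p := by
  intro p
  induction p with
  | nil => intro u v h _ _; simp at h
  | cons a t ih =>
    intro u v h1 h2 h3
    simp only [List.head?_cons, Option.some.injEq] at h1
    subst h1
    cases t with
    | nil =>
      simp only [List.getLast?_singleton, Option.some.injEq] at h2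
      subst h2; exact W.single _
    | cons b t' =>
      rw [List.getLast?_cons_cons] at h2
      simp only [List.Chain', List.isChain_cons_cons] at h3
      exact W.cons h3.1 (ih b v rfl h2 h3.2)

theorem W.isWalk {E : V → V → Bool} {u v : V} {p : List V} (h : W E u v p) :
    IsWalk E u v p := by
  induction h with
  | single u => exact ⟨rfl, by simp, List.isChain_singleton _⟩
  | @cons a w v p h hp ih =>
    obtain ⟨t, rfl⟩ := hp.head_eq
    obtain ⟨h1, h2, h3⟩ := ih
    exact ⟨rfl, by rw [List.getLast?_cons_cons]; exact h2, by simp only [List.Chain', List.isChain_cons_cons]; exact ⟨h, h3⟩⟩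

theorem isWalk_iff {E : V → V → Bool} {u v : V} {p : List V} :
    IsWalk E u v p ↔ W E u v p :=
  ⟨fun ⟨h1, h2, h3⟩ => isWalk_w p u v h1 h2 h3, W.isWalk⟩

theorem W.append {E : V → V → Bool} {u x m l : V} {q pm : List V}
    (h1 : W E u x q) (he : E x m = true) (h2 : W E m l pm) : W E u l (q ++ pm) := by
  induction h1 with
  | single a => exact W.cons he h2
  | cons h hp ih => exact W.cons h (ih he)

theorem W.rt {E : V → V → Bool} {a b : V} {p : List V} (h : W E a b p) :
    Relation.ReflTransGen (fun x y => E x y = true) a b := by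
  induction h with
  | single => exact .refl
  | cons h _ ih => exact .head h ih

theorem rt_exists_W {E : V → V → Bool} {a b : V}
    (h : Relation.ReflTransGen (fun x y => E x y = true) a b) : ∃ p, W E a b p := by
  induction h with
  | refl => exact ⟨[a], W.single a⟩
  | tail _ hbc ih => obtain ⟨p, hp⟩ := ih; exact ⟨p ++ [_], hp.append hbc (W.single _)⟩

theorem W.split {E : V → V → Bool} {r l : V} {q : List V} (h : W E r l q) {u : V} (hu : u ∈ q) :
    ∃ q₁ q₂, q = q₁ ++ u :: q₂ ∧ W E r u (q₁ ++ [u]) ∧ W E u l (u :: q₂) := by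
  induction h with
  | single a =>
    simp only [List.mem_singleton] at hu
    subst hu
    exact ⟨[], [], rfl, W.single _, W.single _⟩
  | @cons a w v p h hp ih =>
    rcases List.mem_cons.1 hu with rfl | hu'
    · exact ⟨[], p, rfl, W.single _, W.cons h hp⟩
    · obtain ⟨q₁, q₂, rfl, hw1, hw2⟩ := ih hu'
      exact ⟨a :: q₁, q₂, rfl, W.cons h hw1, hw2⟩

theorem W.last_edge {E : V → V → Bool} {r w : V} {q : List V} (h : W E r w q) :
    (r = w ∧ q = [r]) ∨ ∃ q' y, W E r y q' ∧ E y w = true ∧ q = q' ++ [w] := by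
  induction h with
  | single a => exact Or.inl ⟨rfl, rfl⟩
  | @cons a b v p h hp ih =>
    rcases ih with ⟨rfl, rfl⟩ | ⟨q', y, hw, he, rfl⟩
    · exact Or.inr ⟨[a], a, W.single a, h, rfl⟩
    · exact Or.inr ⟨a :: q', y, W.cons h hw, he, rfl⟩

section Fin
variable [Fintype V]

theorem parent_unique {E : V → V → Bool} {w a b : V}
    (h : inDeg E w ≤ 1) (ha : E a w = true) (hb : E b w = true) : a = b :=
  Finset.card_le_one.mp h a (Finset.mem_filter.mpr ⟨Finset.mem_univ _, ha⟩)
    b (Finset.mem_filter.mpr ⟨Finset.mem_univ _, hb⟩)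

theorem no_edge_root {E : V → V → Bool} {r a : V} (h : inDeg E r = 0) (ha : E a r = true) :
    False := by
  have : a ∈ Finset.univ.filter (fun u => E u r = true) :=
    Finset.mem_filter.mpr ⟨Finset.mem_univ _, ha⟩
  rw [Finset.card_eq_zero.mp h] at this
  exact absurd this (List.not_mem_nil (a := a))

theorem inDeg_pos {E : V → V → Bool} {w a : V} (ha : E a w = true) : 0 < inDeg E w :=
  Finset.card_pos.mpr ⟨a, Finset.mem_filter.mpr ⟨Finset.mem_univ _, ha⟩⟩

theorem exists_parent {E : V → V → Bool} {v : V} (h : inDeg E v ≠ 0) :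
    ∃ p, E p v = true := by
  obtain ⟨p, hp⟩ := Finset.card_pos.mp (Nat.pos_of_ne_zero h)
  exact ⟨p, (Finset.mem_filter.mp hp).2⟩

theorem exists_child {E : V → V → Bool} {v : V} (h : 0 < outDeg E v) :
    ∃ w, E v w = true := by
  obtain ⟨w, hw⟩ := Finset.card_pos.mp h
  exact ⟨w, (Finset.mem_filter.mp hw).2⟩

theorem outDeg_pos {E : V → V → Bool} {u w : V} (h : E u w = true) : 0 < outDeg E u :=
  Finset.card_pos.mpr ⟨w, Finset.mem_filter.mpr ⟨Finset.mem_univ _, h⟩⟩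

theorem exists_other_parent {E : V → V → Bool} {w u : V}
    (h : ¬ inDeg E w ≤ 1) (hu : E u w = true) : ∃ x, E x w = true ∧ x ≠ u := by
  obtain ⟨x, hx, hxu⟩ := Finset.exists_mem_ne (by omega : 1 < inDeg E w) u
  exact ⟨x, (Finset.mem_filter.mp hx).2, hxu⟩

theorem strict {E : V → V → Bool} {v l : V} {p : List V}
    (h : W E v l p) (ht : ∀ x ∈ p.tail, inDeg E x ≤ 1) :
    ∀ r q, inDeg E r = 0 → W E r l q → v ∈ q := by
  induction h with
  | single a => intro r q _ hq; exact hq.last_mem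
  | @cons a w lv p' h hp ih =>
    intro r q hr hq
    have htail : ∀ x ∈ p', inDeg E x ≤ 1 := fun x hx => ht x (by simpa using hx)
    have hw_in : w ∈ q := ih (fun x hx => htail x (List.mem_of_mem_tail hx)) r q hr hq
    obtain ⟨q₁, q₂, rfl, hw1, _⟩ := hq.split hw_in
    rcases hw1.last_edge with ⟨rfl, _⟩ | ⟨q', y, hwy, hey, heq⟩
    · exact absurd (hr ▸ inDeg_pos h) (by omega)
    · have hw1' : inDeg E w ≤ 1 := htail w (by obtain ⟨t, rfl⟩ := hp.head_eq; simp)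
      have hya : y = a := parent_unique hw1' hey h
      subst hya
      have hmem : y ∈ q₁ ++ [w] := by rw [heq]; exact List.mem_append_left _ hwy.last_mem
      simp only [List.mem_append, List.mem_singleton, List.mem_cons] at hmem ⊢
      tauto

theorem wf_down {E : V → V → Bool} (hac : Acyclic E) :
    WellFounded (fun a b : V => Relation.TransGen (fun x y => E x y = true) b a) := by
  haveI : IsTrans V (fun a b : V => Relation.TransGen (fun x y => E x y = true) b a) :=
    ⟨fun a b c h1 h2 => h2.trans h1⟩
  haveI : IsIrrefl V (fun a b : V => Relation.TransGen (fun x y => E x y = true) b a) :=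
    ⟨fun a => hac a⟩
  exact Finite.wellFounded_of_trans_of_irrefl _

theorem wf_up {E : V → V → Bool} (hac : Acyclic E) :
    WellFounded (fun a b : V => Relation.TransGen (fun x y => E x y = true) a b) := by
  haveI : IsTrans V (fun a b : V => Relation.TransGen (fun x y => E x y = true) a b) :=
    ⟨fun _ _ _ h1 h2 => h1.trans h2⟩
  haveI : IsIrrefl V (fun a b : V => Relation.TransGen (fun x y => E x y = true) a b) :=
    ⟨fun a => hac a⟩
  exact Finite.wellFounded_of_trans_of_irrefl _

theorem greedy {n : ℕ} (N : PhyloNetwork V n) (hTC : TreeChild N) :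
    ∀ v, 0 < outDeg N.E v → ∃ l p, outDeg N.E l = 0 ∧ W N.E v l p ∧
      2 ≤ p.length ∧ ∀ x ∈ p.tail, inDeg N.E x ≤ 1 := by
  intro v
  induction v using (wf_down N.acyclic).induction with
  | _ v ih =>
    intro hv
    obtain ⟨w, hew, hdw⟩ := hTC v hv
    by_cases hw : outDeg N.E w = 0
    · exact ⟨w, [v, w], hw, W.cons hew (W.single w), by simp, by simpa using hdw⟩
    · obtain ⟨l, p, hl, hwp, _, htail⟩ :=
        ih w (Relation.TransGen.single hew) (Nat.pos_of_ne_zero hw)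
      obtain ⟨t, rfl⟩ := hwp.head_eq
      refine ⟨l, v :: w :: t, hl, W.cons hew hwp, by simp, ?_⟩
      intro x hx
      rcases (by simpa using hx : x = w ∨ x ∈ t) with rfl | hx'
      · exact hdw
      · exact htail x (by simpa using hx')

theorem root_reach {n : ℕ} (N : PhyloNetwork V n) :
    ∀ v : V, ∃ r q, inDeg N.E r = 0 ∧ W N.E r v q := by
  intro v
  induction v using (wf_up N.acyclic).induction with
  | _ v ih =>
    by_cases hv : inDeg N.E v = 0
    · exact ⟨v, [v], hv, W.single v⟩
    · obtain ⟨p, hp⟩ := exists_parent hv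
      obtain ⟨r, q, hr, hq⟩ := ih p (Relation.TransGen.single hp)
      exact ⟨r, q ++ [v], hr, hq.append hp (W.single v)⟩

theorem main {n : ℕ} (N : PhyloNetwork V n) :
    (TreeChild N ↔
      ∀ v : V, 0 < outDeg N.E v →
        ∃ l : V, outDeg N.E l = 0 ∧ ∃ p, IsTreePath N.E v l p) ∧
    (TreeChild N ↔
      ∀ v : V, ∃ l : V, outDeg N.E l = 0 ∧ StrictDescendant N.E v l) := by
  have hba : (∀ v : V, 0 < outDeg N.E v →
      ∃ l : V, outDeg N.E l = 0 ∧ ∃ p, IsTreePath N.E v l p) → TreeChild N := by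
    intro hb u hu
    obtain ⟨l, _, p, hwalk, hlen, htail⟩ := hb u hu
    have hW := isWalk_iff.mp hwalk
    cases hW with
    | single => simp at hlen
    | @cons a w lv p' h hp =>
      refine ⟨w, h, htail w ?_⟩
      obtain ⟨t, rfl⟩ := hp.head_eq
      simp
  have hab : TreeChild N → (∀ v : V, 0 < outDeg N.E v →
      ∃ l : V, outDeg N.E l = 0 ∧ ∃ p, IsTreePath N.E v l p) := by
    intro hTC v hv
    obtain ⟨l, p, hl, hW, hlen, htail⟩ := greedy N hTC v hv
    exact ⟨l, hl, p, hW.isWalk, hlen, htail⟩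
  have hac : TreeChild N → ∀ v : V, ∃ l : V, outDeg N.E l = 0 ∧ StrictDescendant N.E v l := by
    intro hTC v
    by_cases hv : outDeg N.E v = 0
    · refine ⟨v, hv, ⟨[v], (W.single v).isWalk⟩, ?_⟩
      intro r p _ hwalk
      exact (isWalk_iff.mp hwalk).last_mem
    · obtain ⟨l, p, hl, hW, _, htail⟩ := greedy N hTC v (Nat.pos_of_ne_zero hv)
      refine ⟨l, hl, ⟨p, hW.isWalk⟩, ?_⟩
      intro r q hr hwalk
      exact strict hW htail r q hr (isWalk_iff.mp hwalk)
  have hca : (∀ v : V, ∃ l : V, outDeg N.E l = 0 ∧ StrictDescendant N.E v l) → TreeChild N := by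
    intro hc u hu
    obtain ⟨l, hl, ⟨p0, hp0⟩, hstrict⟩ := hc u
    have hW0 := isWalk_iff.mp hp0
    have hul : u ≠ l := by rintro rfl; omega
    -- set of children of u that reach l
    cases hW0 with
    | single => exact absurd rfl hul
    | @cons a w0 lv p' he0 hp' =>
      set C : Set V := {c | N.E u c = true ∧
        Relation.ReflTransGen (fun x y => N.E x y = true) c l} with hC
      have hCne : C.Nonempty := ⟨w0, he0, hp'.rt⟩
      haveI : IsTrans V (Relation.TransGen (fun x y => N.E x y = true)) :=
        ⟨fun _ _ _ h1 h2 => h1.trans h2⟩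
      haveI : IsIrrefl V (Relation.TransGen (fun x y => N.E x y = true)) :=
        ⟨fun a => N.acyclic a⟩
      obtain ⟨m, ⟨hEm, hml⟩, hmin⟩ :=
        (Finite.wellFounded_of_trans_of_irrefl
          (Relation.TransGen (fun x y => N.E x y = true))).has_min C hCne
      by_cases hdm : inDeg N.E m ≤ 1
      · exact ⟨m, hEm, hdm⟩
      exfalso
      obtain ⟨x, hxm, hxu⟩ := exists_other_parent hdm hEm
      by_cases hcase : ∃ r q, inDeg N.E r = 0 ∧ W N.E r x q ∧ u ∉ q
      · -- walk avoiding u: contradiction with strictness of l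
        obtain ⟨r, q, hr, hq, huq⟩ := hcase
        obtain ⟨pm, hpm⟩ := rt_exists_W hml
        have hfull : W N.E r l (q ++ pm) := hq.append hxm hpm
        have humem : u ∈ q ++ pm := hstrict r (q ++ pm) hr hfull.isWalk
        rcases List.mem_append.mp humem with h' | h'
        · exact huq h'
        · -- u on walk from m to l: m reaches u, but edge u→m: cycle
          obtain ⟨q₁, q₂, _, hw1, _⟩ := hpm.split h'
          exact N.acyclic m (Relation.TransGen.trans_right hw1.rt
            (Relation.TransGen.single hEm))
      · -- every root walk to x passes u: find child of C strictly above m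
        push_neg at hcase
        obtain ⟨r, q, hr, hq⟩ := root_reach N x
        have huq : u ∈ q := hcase r q hr hq
        obtain ⟨q₁, q₂, _, _, hw2⟩ := hq.split huq
        cases hw2 with
        | single => exact hxu rfl
        | @cons a c v pq hec hpc =>
          have hcm : Relation.TransGen (fun x y => N.E x y = true) c m :=
            Relation.TransGen.trans_right hpc.rt (Relation.TransGen.single hxm)
          have hcC : c ∈ C := ⟨hec, hcm.to_reflTransGen.trans hml⟩
          exact hmin c hcC hcm
  exact ⟨⟨hab, hba⟩, ⟨hac, hca⟩⟩

end Fin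
end TCProof


/-- For a phylogenetic network, the tree-child condition is equivalent to: every
internal node has a leaf among its tree descendants, and also to: every node has a
leaf among its strict descendants. -/
theorem treeChild_iff_treeCluster_nonempty_iff_strictCluster_nonempty
    {V : Type*} [Fintype V] {n : ℕ} (N : PhyloNetwork V n) :
    (TreeChild N ↔
      ∀ v : V, 0 < outDeg N.E v →
        ∃ l : V, outDeg N.E l = 0 ∧ ∃ p, IsTreePath N.E v l p) ∧
    (TreeChild N ↔
      ∀ v : V, ∃ l : V, outDeg N.E l = 0 ∧ StrictDescendant N.E v l) :=
  TCProof.main N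
end

section
/- Every rooted galled tree is a tree-child phylogenetic network: if N is a rooted phylogenetic network in which no tree node has out-degree 1, every hybrid node has in-degree 2, and no arc belongs to two distinct recombination cycles, then every internal node of N has at least one child that is a tree node. -/
/-- The intermediate nodes of a path: all nodes except the origin and the end. -/
def Intermediates {V : Type*} (p : List V) : List V := p.tail.dropLast

/-- A recombination cycle: a pair of distinct directed paths with the same origin,
the same end, and no intermediate node in common. -/
def IsRecombCycle {V : Type*} (E : V → V → Bool) (p q : List V) : Prop :=
  p ≠ q ∧ p ≠ [] ∧ q ≠ [] ∧
  p.head? = q.head? ∧ p.getLast? = q.getLast? ∧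
  p.Chain' (fun a b => E a b = true) ∧ q.Chain' (fun a b => E a b = true) ∧
  ∀ x ∈ Intermediates p, x ∉ Intermediates q

/-- The arc `(a,b)` occurs in the path `p`. -/
def ArcIn {V : Type*} (a b : V) (p : List V) : Prop := [a, b] <:+: p

section Helpers
variable {V : Type*}

lemma getLast?_of_suffix {s l : List V} (h : s <:+ l) (hs : s ≠ []) :
    l.getLast? = s.getLast? := by
  obtain ⟨t, rfl⟩ := h
  exact List.getLast?_append_of_ne_nil t hs

lemma chain'_transGen {R : V → V → Prop} :
    ∀ {l : List V} {x y : V}, List.Chain' R (x :: l) → y ∈ l → Relation.TransGen R x y := by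
  intro l
  induction l with
  | nil => intro x y _ h; simp at h
  | cons z l ih =>
    intro x y hc hy
    have hxz : R x z := (List.isChain_cons_cons.mp hc).1
    rcases List.mem_cons.mp hy with rfl | hy
    · exact Relation.TransGen.single hxz
    · exact Relation.TransGen.head hxz (ih (List.isChain_cons_cons.mp hc).2 hy)

lemma suffix_of_le {s t l : List V} (hs : s <:+ l) (ht : t <:+ l)
    (h : s.length ≤ t.length) : s <:+ t := by
  rcases List.suffix_or_suffix_of_suffix hs ht with h' | h'
  · exact h'
  · rw [h'.eq_of_length (le_antisymm h'.length_le h)]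

lemma mid_suffix {x : V} {p : List V} (hx : x ∈ Intermediates p) :
    ∃ t : List V, t ≠ [] ∧ (x :: t) <:+ p ∧ (x :: t).length < p.length := by
  unfold Intermediates at hx
  obtain ⟨s, t₀, hst⟩ := List.append_of_mem hx
  have htne : p.tail ≠ [] := by
    intro h; rw [h] at hx; simp at hx
  have hdec : p.tail = s ++ x :: (t₀ ++ [p.tail.getLast htne]) := by
    conv_lhs => rw [← List.dropLast_append_getLast htne]
    rw [hst]; simp
  have hpne : p ≠ [] := by intro h; rw [h] at htne; simp at htne
  refine ⟨t₀ ++ [p.tail.getLast htne], by simp, ?_, ?_⟩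
  · exact List.IsSuffix.trans ⟨s, hdec.symm⟩ (List.tail_suffix p)
  · have h1 : p.length = p.tail.length + 1 := by
      cases p with
      | nil => simp at hpne
      | cons a t => simp
    have h2 : p.tail.length = s.length + (t₀.length + 2) := by
      rw [hdec]; simp
    simp only [List.length_cons, List.length_append, List.length_nil]
    omega

variable {E : V → V → Bool}

lemma walk_ne_nil {u v : V} {p : List V} (h : IsWalk E u v p) : p ≠ [] := by
  intro hp; rw [hp] at h; simp [IsWalk] at h

lemma walk_suffix {z v x : V} {p t : List V} (h : IsWalk E z v p)
    (hs : (x :: t) <:+ p) : IsWalk E x v (x :: t) := by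
  refine ⟨rfl, ?_, h.2.2.suffix hs⟩
  rw [← getLast?_of_suffix hs (by simp)]
  exact h.2.1

lemma walk_concat {r a v : V} {p : List V} (hp : IsWalk E r a p)
    (ha : E a v = true) : IsWalk E r v (p ++ [v]) := by
  obtain ⟨h1, h2, h3⟩ := hp
  refine ⟨?_, List.getLast?_concat, ?_⟩
  · cases p with
    | nil => simp at h1
    | cons b t => simpa using h1
  · unfold List.Chain'; rw [List.isChain_append]
    refine ⟨h3, List.isChain_singleton v, fun x hx y hy => ?_⟩
    simp at hy; subst hy
    rw [h2] at hx; simp at hx; subst hx; exact ha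

lemma wf_parent [Finite V] (hac : Acyclic E) :
    WellFounded (fun a b : V => E a b = true) := by
  have h1 : IsTrans V (Relation.TransGen (fun a b : V => E a b = true)) := inferInstance
  have h2 : IsIrrefl V (Relation.TransGen (fun a b : V => E a b = true)) := ⟨hac⟩
  haveI := h1; haveI := h2
  exact @Subrelation.wf V (Relation.TransGen (fun a b : V => E a b = true))
    (fun a b : V => E a b = true) (fun {a b} h => Relation.TransGen.single h)
    (Finite.wellFounded_of_trans_of_irrefl (Relation.TransGen (fun a b : V => E a b = true)))

lemma reach_from_root [Fintype V] (hac : Acyclic E) {r : V}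
    (hru : ∀ v, inDeg E v = 0 → v = r) (v : V) : ∃ p, IsWalk E r v p := by
  induction v using (wf_parent hac).induction with
  | _ v ih =>
    by_cases h0 : inDeg E v = 0
    · have hvr := hru v h0; subst hvr
      exact ⟨[v], rfl, by simp, List.isChain_singleton v⟩
    · have hex : ∃ a, E a v = true := by
        by_contra hno; push_neg at hno
        exact h0 (Finset.card_eq_zero.mpr (Finset.filter_eq_empty_iff.mpr (fun a _ => hno a)))
      obtain ⟨a, ha⟩ := hex
      obtain ⟨p, hp⟩ := ih a ha
      exact ⟨p ++ [v], walk_concat hp ha⟩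

end Helpers


section Recomb
variable {V : Type*} {E : V → V → Bool}

lemma suffix_concat_of_getLast {a x : V} {p : List V} (h : p.getLast? = some a) :
    [a, x] <:+ p ++ [x] := by
  have hne : p ≠ [] := by intro hp; rw [hp] at h; simp at h
  have ha : p.getLast hne = a := by
    rw [List.getLast?_eq_getLast hne] at h; exact Option.some.inj h
  refine ⟨p.dropLast, ?_⟩
  conv_rhs => rw [← List.dropLast_append_getLast hne, ha]
  simp

lemma exists_recomb [Fintype V] (hac : Acyclic E) {r : V}
    (hru : ∀ w, inDeg E w = 0 → w = r)
    {v a b : V} (hab : a ≠ b) (ha : E a v = true) (hb : E b v = true) :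
    ∃ P Q, IsRecombCycle E P Q ∧ [a, v] <:+ P ∧ [b, v] <:+ Q := by
  suffices H : ∀ n (P Q : List V), P.length + Q.length ≤ n →
      (∃ z, IsWalk E z v P ∧ IsWalk E z v Q) → [a,v] <:+ P → [b,v] <:+ Q →
      ∃ P' Q', IsRecombCycle E P' Q' ∧ [a,v] <:+ P' ∧ [b,v] <:+ Q' by
    obtain ⟨p, hp⟩ := reach_from_root hac hru a
    obtain ⟨q, hq⟩ := reach_from_root hac hru b
    exact H _ (p ++ [v]) (q ++ [v]) le_rfl ⟨r, walk_concat hp ha, walk_concat hq hb⟩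
      (suffix_concat_of_getLast hp.2.1) (suffix_concat_of_getLast hq.2.1)
  intro n
  induction n with
  | zero =>
    intro P Q hlen hw _ _
    obtain ⟨z, hP, _⟩ := hw
    have := walk_ne_nil hP
    have : P.length ≠ 0 := by simpa [List.length_eq_zero_iff] using this
    omega
  | succ n ih =>
    intro P Q hlen hw haP hbQ
    obtain ⟨z, hP, hQ⟩ := hw
    by_cases hdisj : ∀ x ∈ Intermediates P, x ∉ Intermediates Q
    · refine ⟨P, Q, ⟨?_, walk_ne_nil hP, walk_ne_nil hQ, hP.1.trans hQ.1.symm,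
        hP.2.1.trans hQ.2.1.symm, hP.2.2, hQ.2.2, hdisj⟩, haP, hbQ⟩
      intro hPQ
      subst hPQ
      rcases List.suffix_or_suffix_of_suffix haP hbQ with h' | h' <;>
      · have := h'.eq_of_length (by simp)
        simp at this
        first | exact hab this | exact hab this.symm
    · push_neg at hdisj
      obtain ⟨x, hxP, hxQ⟩ := hdisj
      obtain ⟨tP, htPne, hsufP, hlenP⟩ := mid_suffix hxP
      obtain ⟨tQ, htQne, hsufQ, hlenQ⟩ := mid_suffix hxQ
      have h2P : 2 ≤ (x :: tP).length := by
        have : tP.length ≠ 0 := by simpa [List.length_eq_zero_iff] using htPne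
        simp; omega
      have h2Q : 2 ≤ (x :: tQ).length := by
        have : tQ.length ≠ 0 := by simpa [List.length_eq_zero_iff] using htQne
        simp; omega
      refine ih (x :: tP) (x :: tQ) (by omega) ⟨x, walk_suffix hP hsufP, walk_suffix hQ hsufQ⟩
        (suffix_of_le haP hsufP (by simpa using h2P)) (suffix_of_le hbQ hsufQ (by simpa using h2Q))

end Recomb


/-- Every rooted galled tree is a tree-child phylogenetic network. -/
theorem galledTree_treeChild {V : Type*} [Fintype V] {n : ℕ} (N : PhyloNetwork V n)
    (hout : ∀ v : V, inDeg N.E v ≤ 1 → outDeg N.E v ≠ 1)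
    (hin : ∀ v : V, 1 < inDeg N.E v → inDeg N.E v = 2)
    (hgalled : ∀ (a b : V) (p q p' q' : List V), N.E a b = true →
      IsRecombCycle N.E p q → IsRecombCycle N.E p' q' →
      (ArcIn a b p ∨ ArcIn a b q) → (ArcIn a b p' ∨ ArcIn a b q') →
      ({p, q} : Set (List V)) = {p', q'}) :
    TreeChild N := by
  intro u hu
  by_contra hno
  push_neg at hno
  have hac := N.acyclic
  obtain ⟨r, hr0, hru⟩ := N.rooted
  have hru' : ∀ w, inDeg N.E w = 0 → w = r := fun w h => hru w h
  -- basic: no self loops on edges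
  have hirr : ∀ {x y : V}, N.E x y = true → x ≠ y := by
    intro x y hxy h
    subst h
    exact hac x (Relation.TransGen.single hxy)
  -- every child of u has a recombination cycle through the arc from u
  have hcyc : ∀ y, N.E u y = true → ∃ P Q, IsRecombCycle N.E P Q ∧ [u,y] <:+ P := by
    intro y hy
    have h2 : 1 < inDeg N.E y := hno y hy
    obtain ⟨w, hwmem, hwne⟩ := Finset.exists_mem_ne h2 u
    have hwE : N.E w y = true := (Finset.mem_filter.mp hwmem).2
    obtain ⟨P, Q, hPQ, hP, _⟩ := exists_recomb hac hru' hwne.symm hy hwE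
    exact ⟨P, Q, hPQ, hP⟩
  -- extracting the end of a cycle
  have endP : ∀ {P : List V} {c y : V}, [c,y] <:+ P → P.getLast? = some y := by
    intro P c y h
    rw [getLast?_of_suffix h (by simp)]; simp
  have memEq : ∀ {R P' Q' : List V} {x y : V}, R ∈ ({P', Q'} : Set (List V)) →
      R.getLast? = some x → P'.getLast? = some y → Q'.getLast? = some y → x = y := by
    intro R P' Q' x y hmem hR hP' hQ'
    simp only [Set.mem_insert_iff, Set.mem_singleton_iff] at hmem
    rcases hmem with rfl | rfl
    · rw [hR] at hP'; exact Option.some.inj hP'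
    · rw [hR] at hQ'; exact Option.some.inj hQ'
  -- Lemma B : no recombination cycle has the form ([u,x], B)
  have lemB : ∀ x B, N.E u x = true → IsRecombCycle N.E [u,x] B → False := by
    intro x B hx hc
    obtain ⟨hne0, -, hBne, hhead, hlast, hchA, hchB, hdisj⟩ := hc
    obtain ⟨b0, B', rfl⟩ : ∃ b0 B', B = b0 :: B' := by
      cases B with
      | nil => exact absurd rfl hBne
      | cons b0 B' => exact ⟨b0, B', rfl⟩
    have hb0 : u = b0 := by
      have : some u = some b0 := by simpa using hhead
      exact Option.some.inj this
    subst hb0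
    have hux : u ≠ x := hirr hx
    obtain ⟨y, B'', rfl⟩ : ∃ y B'', B' = y :: B'' := by
      cases B' with
      | nil => simp at hlast; exact absurd hlast.symm hux
      | cons y B'' => exact ⟨y, B'', rfl⟩
    have hEuy : N.E u y = true := (List.isChain_cons_cons.mp hchB).1
    have hyx : y ≠ x := by
      rintro rfl
      cases B'' with
      | nil => exact hne0 rfl
      | cons z B3 =>
        have hlast2 : (z :: B3).getLast? = some y := by
          have : ((u :: y :: z :: B3) : List V).getLast? = some y := by simpa using hlast.symm
          rw [show (u :: y :: z :: B3) = [u, y] ++ (z :: B3) by simp,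
            List.getLast?_append_of_ne_nil _ (by simp)] at this
          exact this
        have hymem : y ∈ z :: B3 := by
          have hne : (z :: B3 : List V) ≠ [] := by simp
          rw [List.getLast?_eq_getLast hne] at hlast2
          rw [← Option.some.inj hlast2]
          exact List.getLast_mem hne
        exact hac y (chain'_transGen (List.isChain_cons_cons.mp hchB).2 hymem)
    obtain ⟨Py, Qy, hPQy, hPy⟩ := hcyc y hEuy
    have harc1 : ArcIn u y (u :: y :: B'') := ⟨[], B'', by simp⟩
    have harc2 : ArcIn u y Py := hPy.isInfix
    have hset := hgalled u y [u,x] (u :: y :: B'') Py Qy hEuy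
      ⟨hne0, by simp, hBne, hhead, hlast, hchA, hchB, hdisj⟩ hPQy
      (Or.inr harc1) (Or.inl harc2)
    have hBmem : (u :: y :: B'') ∈ ({Py, Qy} : Set (List V)) := by
      rw [← hset]; exact Set.mem_insert_iff.mpr (Or.inr rfl)
    have hPyEnd : Py.getLast? = some y := endP hPy
    have hQyEnd : Qy.getLast? = some y := hPQy.2.2.2.2.1 ▸ hPyEnd
    exact hyx (memEq hBmem (by simpa using hlast.symm) hPyEnd hQyEnd).symm
  -- pick a child v of u
  obtain ⟨v, hvmem⟩ := Finset.card_pos.mp hu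
  have hv : N.E u v = true := (Finset.mem_filter.mp hvmem).2
  obtain ⟨P, Q, hPQ, hP⟩ := hcyc v hv
  have hPend : P.getLast? = some v := endP hP
  by_cases hPuv : P = [u, v]
  · exact lemB v Q hv (hPuv ▸ hPQ)
  · -- P = L₀ ++ [c, u, v]
    obtain ⟨L, hL⟩ := hP
    have hLne : L ≠ [] := by
      intro h; rw [h] at hL; exact hPuv hL.symm
    obtain ⟨c, L₀, hc⟩ : ∃ c L₀, L = L₀ ++ [c] :=
      ⟨L.getLast hLne, L.dropLast, (List.dropLast_append_getLast hLne).symm⟩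
    have hsuf3 : [c, u, v] <:+ P := ⟨L₀, by rw [← hL, hc]; simp⟩
    have hEcu : N.E c u = true := by
      have := hPQ.2.2.2.2.2.1.suffix hsuf3
      exact (List.isChain_cons_cons.mp this).1
    have harcP : ArcIn c u P :=
      List.IsInfix.trans (List.IsPrefix.isInfix ⟨[v], rfl⟩) hsuf3.isInfix
    have hcmem : c ∈ Finset.univ.filter (fun w => N.E w u = true) := by
      simp [hEcu]
    by_cases h1 : inDeg N.E u ≤ 1
    · -- u is a tree node: it has another child y ≠ v
      have hout2 : 1 < outDeg N.E u := lt_of_le_of_ne hu (Ne.symm (hout u h1))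
      obtain ⟨y, hymem, hyv⟩ := Finset.exists_mem_ne hout2 v
      have hy : N.E u y = true := (Finset.mem_filter.mp hymem).2
      obtain ⟨Py, Qy, hPQy, hPy⟩ := hcyc y hy
      by_cases hPy2 : Py = [u, y]
      · exact lemB y Qy hy (hPy2 ▸ hPQy)
      · obtain ⟨L', hL'⟩ := hPy
        have hL'ne : L' ≠ [] := by
          intro h; rw [h] at hL'; exact hPy2 hL'.symm
        obtain ⟨c', L₀', hc'⟩ : ∃ c' L₀', L' = L₀' ++ [c'] :=
          ⟨L'.getLast hL'ne, L'.dropLast, (List.dropLast_append_getLast hL'ne).symm⟩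
        have hsuf3' : [c', u, y] <:+ Py := ⟨L₀', by rw [← hL', hc']; simp⟩
        have hEc'u : N.E c' u = true := by
          have := hPQy.2.2.2.2.2.1.suffix hsuf3'
          exact (List.isChain_cons_cons.mp this).1
        have hcc : c' = c := by
          have hc'mem : c' ∈ Finset.univ.filter (fun w => N.E w u = true) := by
            simp [hEc'u]
          exact Finset.card_le_one.mp h1 c' hc'mem c hcmem
        have harcPy : ArcIn c u Py := by
          rw [← hcc]
          exact List.IsInfix.trans (List.IsPrefix.isInfix ⟨[y], rfl⟩) hsuf3'.isInfix
        have hset := hgalled c u P Q Py Qy hEcu hPQ hPQy (Or.inl harcP) (Or.inl harcPy)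
        have hPmem : P ∈ ({Py, Qy} : Set (List V)) := by
          rw [← hset]; exact Set.mem_insert _ _
        have hPyEnd : Py.getLast? = some y := endP (⟨L', hL'⟩ : [u,y] <:+ Py)
        have hQyEnd : Qy.getLast? = some y := hPQy.2.2.2.2.1 ▸ hPyEnd
        exact hyv (memEq hPmem hPend hPyEnd hQyEnd).symm
    · -- u is hybrid: a recombination cycle ends at u through arc c→u
      push_neg at h1
      obtain ⟨d, hdmem, hdc⟩ := Finset.exists_mem_ne h1 c
      have hdE : N.E d u = true := (Finset.mem_filter.mp hdmem).2
      obtain ⟨P'', Q'', hPQ'', hP'', _⟩ := exists_recomb hac hru' hdc.symm hEcu hdE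
      have harc'' : ArcIn c u P'' := hP''.isInfix
      have hset := hgalled c u P Q P'' Q'' hEcu hPQ hPQ'' (Or.inl harcP) (Or.inl harc'')
      have hPmem : P ∈ ({P'', Q''} : Set (List V)) := by
        rw [← hset]; exact Set.mem_insert _ _
      have hP''End : P''.getLast? = some u := endP hP''
      have hQ''End : Q''.getLast? = some u := hPQ''.2.2.2.2.1 ▸ hP''End
      exact hirr hv (memEq hPmem hPend hP''End hQ''End).symm
end

section
/- Let N=(V,E) be a tree-child phylogenetic network with n leaves, and suppose N has no tree node of out-degree 1. Then |V| ≤ 2n − 1 + Σ_{v∈V_H} d_i(v), where V_H is the set of hybrid nodes of N and d_i(v) denotes the in-degree of v. -/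
lemma handshake {V : Type*} [Fintype V] (E : V → V → Bool) :
    ∑ v, inDeg E v = ∑ v, outDeg E v := by
  unfold inDeg outDeg
  simp only [Finset.card_filter]
  rw [Finset.sum_comm]

/-- A tree-child phylogenetic network with `n` leaves and no out-degree 1 tree node
has at most `2n - 1 + Σ_{v hybrid} d_i(v)` nodes. -/
theorem card_nodes_le {V : Type*} [Fintype V] {n : ℕ} (N : PhyloNetwork V n)
    (h : TreeChild N)
    (hout : ∀ v : V, inDeg N.E v ≤ 1 → outDeg N.E v ≠ 1) :
    Fintype.card V ≤
      2 * n - 1 + ∑ v ∈ Finset.univ.filter (fun v : V => 1 < inDeg N.E v), inDeg N.E v := by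
  classical
  set E := N.E with hE
  obtain ⟨r, hr, hru⟩ := N.rooted
  set A : Finset V := Finset.univ.filter (fun v => inDeg E v ≤ 1) with hA
  set H : Finset V := Finset.univ.filter (fun v : V => 1 < inDeg E v) with hH
  set Ti : Finset V := Finset.univ.filter (fun v => inDeg E v ≤ 1 ∧ 0 < outDeg E v) with hTi
  set Lt : Finset V := Finset.univ.filter (fun v => inDeg E v ≤ 1 ∧ outDeg E v = 0) with hLt
  set Hi : Finset V := Finset.univ.filter (fun v => 1 < inDeg E v ∧ 0 < outDeg E v) with hHi
  set Lh : Finset V := Finset.univ.filter (fun v => 1 < inDeg E v ∧ outDeg E v = 0) with hLh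
  -- |V| = |A| + |H|
  have hsplitV : A.card + H.card = Fintype.card V := by
    rw [hA, hH, ← Finset.card_univ]
    have := Finset.card_filter_add_card_filter_not
      (s := (Finset.univ : Finset V)) (p := fun v => inDeg E v ≤ 1)
    simpa [not_le] using this
  -- |A| = |Lt| + |Ti|
  have hsplitA : Lt.card + Ti.card = A.card := by
    rw [hA, hLt, hTi]
    have := Finset.card_filter_add_card_filter_not
      (s := Finset.univ.filter (fun v : V => inDeg E v ≤ 1)) (p := fun v => outDeg E v = 0)
    simp only [Finset.filter_filter] at this
    simpa [Nat.pos_iff_ne_zero] using this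
  have hsplitH : Lh.card + Hi.card = H.card := by
    rw [hH, hLh, hHi]
    have := Finset.card_filter_add_card_filter_not
      (s := Finset.univ.filter (fun v : V => 1 < inDeg E v)) (p := fun v => outDeg E v = 0)
    simp only [Finset.filter_filter] at this
    simpa [Nat.pos_iff_ne_zero] using this
  -- number of leaves = n
  have hleaves : (Finset.univ.filter (fun v : V => outDeg E v = 0)).card = n := by
    have hb : ((Finset.univ : Finset (Fin n))).card
        = (Finset.univ.filter (fun v : V => outDeg E v = 0)).card := by
      apply Finset.card_bij (fun i _ => N.leaf i)
      · intro i _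
        simp [hE, N.leaf_isLeaf i]
      · intro a _ b _ hab
        exact N.leaf_inj hab
      · intro v hv
        have hv0 : outDeg N.E v = 0 := by
          have := (Finset.mem_filter.1 hv).2
          rwa [hE] at this
        obtain ⟨i, hi⟩ := N.leaf_surj v hv0
        exact ⟨i, Finset.mem_univ _, hi⟩
    simpa using hb.symm
  have hLtLh : Lt.card + Lh.card = n := by
    rw [← hleaves, hLt, hLh]
    have := Finset.card_filter_add_card_filter_not
      (s := Finset.univ.filter (fun v : V => outDeg E v = 0)) (p := fun v => inDeg E v ≤ 1)
    simp only [Finset.filter_filter] at this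
    rw [← this]
    congr 1 <;> (congr 1; ext v; simp [not_le, and_comm])
  -- sum of in-degrees over tree nodes
  have hrA : r ∈ A := by simp [hA, hE, hr]
  have hsumA : ∑ v ∈ A, inDeg E v + 1 ≤ A.card := by
    have h1 : ∑ v ∈ A.erase r, inDeg E v = ∑ v ∈ A, inDeg E v :=
      Finset.sum_erase A hr
    have h2 : ∑ v ∈ A.erase r, inDeg E v ≤ (A.erase r).card := by
      rw [Finset.card_eq_sum_ones]
      refine Finset.sum_le_sum fun v hv => ?_
      exact (Finset.mem_filter.1 (Finset.mem_of_mem_erase hv)).2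
    have h3 : (A.erase r).card = A.card - 1 := Finset.card_erase_of_mem hrA
    have h4 : 1 ≤ A.card := Finset.card_pos.2 ⟨r, hrA⟩
    omega
  -- split of total in-degree sum
  have hsumsplit : ∑ v, inDeg E v = ∑ v ∈ A, inDeg E v + ∑ v ∈ H, inDeg E v := by
    have hHeq : H = Finset.univ.filter (fun v : V => ¬ inDeg E v ≤ 1) := by
      rw [hH]; ext v; simp [not_le]
    rw [hA, hHeq]
    exact (Finset.sum_filter_add_sum_filter_not Finset.univ (fun v => inDeg E v ≤ 1) _).symm
  -- out-degree lower bound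
  have hdisj : Disjoint Ti Hi := by
    rw [Finset.disjoint_left]
    intro a ha hb
    have h1 := (Finset.mem_filter.1 ha).2
    have h2 := (Finset.mem_filter.1 hb).2
    omega
  have hout2 : 2 * Ti.card + Hi.card ≤ ∑ v, outDeg E v := by
    have h5 : ∑ v ∈ Ti ∪ Hi, outDeg E v ≤ ∑ v, outDeg E v :=
      Finset.sum_le_sum_of_subset (Finset.subset_univ _)
    rw [Finset.sum_union hdisj] at h5
    have h6 : 2 * Ti.card ≤ ∑ v ∈ Ti, outDeg E v := by
      rw [Finset.card_eq_sum_ones, Finset.mul_sum]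
      refine Finset.sum_le_sum fun v hv => ?_
      have hm := (Finset.mem_filter.1 hv).2
      have := hout v hm.1
      omega
    have h7 : Hi.card ≤ ∑ v ∈ Hi, outDeg E v := by
      rw [Finset.card_eq_sum_ones]
      refine Finset.sum_le_sum fun v hv => ?_
      exact (Finset.mem_filter.1 hv).2.2
    omega
  have hhs := handshake E
  omega
end

section
/- Let N=(V,E) be a tree-child phylogenetic network with n leaves, with no tree node of out-degree 1, and suppose every hybrid node of N has in-degree at most m. Then |V| ≤ (m+2)(n−1)+1. -/
section Aux
variable {V : Type*} [Fintype V] {n : ℕ}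

lemma parent_unique {E : V → V → Bool} {z a b : V} (hz : inDeg E z ≤ 1)
    (ha : E a z = true) (hb : E b z = true) : a = b := by
  have h1 : a ∈ Finset.univ.filter (fun u => E u z = true) := by simp [ha]
  have h2 : b ∈ Finset.univ.filter (fun u => E u z = true) := by simp [hb]
  exact Finset.card_le_one.mp hz a h1 b h2

lemma indeg_pos {E : V → V → Bool} {z a : V} (ha : E a z = true) : 0 < inDeg E z :=
  Finset.card_pos.mpr ⟨a, by simp [ha]⟩

noncomputable def tstep (N : PhyloNetwork V n) (h : TreeChild N) (v : V) : V :=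
  if h0 : 0 < outDeg N.E v then (h v h0).choose else v

variable (N : PhyloNetwork V n) (h : TreeChild N)

lemma tstep_leaf {v : V} (hv : outDeg N.E v = 0) : tstep N h v = v := by
  simp [tstep, hv]

lemma tstep_edge {v : V} (hv : 0 < outDeg N.E v) :
    N.E v (tstep N h v) = true ∧ inDeg N.E (tstep N h v) ≤ 1 := by
  simp only [tstep, dif_pos hv]
  exact (h v hv).choose_spec

lemma tstep_iter_fix {v : V} {i : ℕ} (hv : outDeg N.E ((tstep N h)^[i] v) = 0) :
    ∀ k, (tstep N h)^[i + k] v = (tstep N h)^[i] v := by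
  intro k
  induction k with
  | zero => rfl
  | succ k ih =>
    rw [← Nat.add_assoc, Function.iterate_succ_apply', ih, tstep_leaf N h hv]

lemma tstep_chain {v : V} {K : ℕ} (hK : ∀ i ≤ K, outDeg N.E ((tstep N h)^[i] v) ≠ 0) :
    ∀ j i, i < j → j ≤ K + 1 →
      Relation.TransGen (fun a b => N.E a b = true) ((tstep N h)^[i] v) ((tstep N h)^[j] v) := by
  intro j
  induction j with
  | zero => intro i hij _; omega
  | succ j ih =>
    intro i hij hjK
    have hedge : Relation.TransGen (fun a b => N.E a b = true)
        ((tstep N h)^[j] v) ((tstep N h)^[j+1] v) := by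
      have hj : outDeg N.E ((tstep N h)^[j] v) ≠ 0 := hK j (by omega)
      have := (tstep_edge N h (Nat.pos_of_ne_zero hj)).1
      rw [Function.iterate_succ_apply']
      exact Relation.TransGen.single this
    rcases Nat.lt_or_ge i j with h' | h'
    · exact (ih i h' (by omega)).trans hedge
    · have : i = j := by omega
      subst this; exact hedge

lemma exists_sink_iter (v : V) :
    ∃ i ≤ Fintype.card V, outDeg N.E ((tstep N h)^[i] v) = 0 := by
  by_contra hc
  push_neg at hc
  have hK : ∀ i ≤ Fintype.card V, outDeg N.E ((tstep N h)^[i] v) ≠ 0 := fun i hi => hc i hi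
  have hinj : Function.Injective (fun i : Fin (Fintype.card V + 1) => (tstep N h)^[(i : ℕ)] v) := by
    intro a b hab
    by_contra hne
    have hne' : (a : ℕ) ≠ (b : ℕ) := fun q => hne (Fin.ext q)
    rcases Nat.lt_or_ge (a : ℕ) (b : ℕ) with h' | h'
    · have hab2 : (tstep N h)^[(a : ℕ)] v = (tstep N h)^[(b : ℕ)] v := hab
      have := tstep_chain N h hK b a h' (Nat.le_of_lt_succ b.isLt |>.trans (Nat.le_succ _))
      rw [hab2] at this
      exact N.acyclic _ this
    · have hab2 : (tstep N h)^[(a : ℕ)] v = (tstep N h)^[(b : ℕ)] v := hab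
      have h'' : (b : ℕ) < (a : ℕ) := by omega
      have := tstep_chain N h hK a b h'' (Nat.le_of_lt_succ a.isLt |>.trans (Nat.le_succ _))
      rw [hab2] at this
      exact N.acyclic _ this
  have := Fintype.card_le_of_injective _ hinj
  simp at this

noncomputable def tleaf (N : PhyloNetwork V n) (h : TreeChild N) (v : V) : V :=
  (tstep N h)^[Fintype.card V] v

lemma tleaf_sink (v : V) : outDeg N.E (tleaf N h v) = 0 := by
  obtain ⟨i, hi, h0⟩ := exists_sink_iter N h v
  have : Fintype.card V = i + (Fintype.card V - i) := by omega
  rw [tleaf, this, tstep_iter_fix N h h0]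
  exact h0

lemma on_path_start {u : V} (hu : inDeg N.E u ≠ 1) :
    ∀ k (v : V), (tstep N h)^[k] v = u → v = u := by
  intro k
  induction k with
  | zero => exact fun v h' => h'
  | succ k ih =>
    intro v h'
    rw [Function.iterate_succ_apply'] at h'
    rcases Nat.eq_zero_or_pos (outDeg N.E ((tstep N h)^[k] v)) with h0 | h0
    · rw [tstep_leaf N h h0] at h'
      exact ih v h'
    · exfalso
      obtain ⟨he, hd⟩ := tstep_edge N h h0
      rw [h'] at he hd
      have := indeg_pos he
      omega

lemma paths_meet :
    ∀ s a b (u v : V), a + b ≤ s → (tstep N h)^[a] u = (tstep N h)^[b] v →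
      (∃ k, (tstep N h)^[k] u = v) ∨ (∃ k, (tstep N h)^[k] v = u) := by
  intro s
  induction s with
  | zero =>
    intro a b u v hs hab
    have ha : a = 0 := by omega
    have hb : b = 0 := by omega
    subst ha; subst hb
    exact Or.inl ⟨0, by simpa using hab⟩
  | succ s ih =>
    intro a b u v hs hab
    match a, b with
    | 0, b => exact Or.inr ⟨b, hab.symm⟩
    | a + 1, 0 => exact Or.inl ⟨a + 1, hab⟩
    | a + 1, b + 1 =>
      rw [Function.iterate_succ_apply', Function.iterate_succ_apply'] at hab
      rcases Nat.eq_zero_or_pos (outDeg N.E ((tstep N h)^[a] u)) with h0 | h0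
      · rw [tstep_leaf N h h0] at hab
        exact ih a (b + 1) u v (by omega) (by rw [Function.iterate_succ_apply']; exact hab)
      rcases Nat.eq_zero_or_pos (outDeg N.E ((tstep N h)^[b] v)) with h1 | h1
      · rw [tstep_leaf N h h1] at hab
        exact ih (a + 1) b u v (by omega)
          (by rw [Function.iterate_succ_apply']; exact hab)
      · obtain ⟨hex, hdx⟩ := tstep_edge N h h0
        obtain ⟨hey, hdy⟩ := tstep_edge N h h1
        have hxy : (tstep N h)^[a] u = (tstep N h)^[b] v :=
          parent_unique hdy (hab ▸ hex) hey
        exact ih a b u v (by omega) hxy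

lemma tleaf_inj {u v : V} (hu : inDeg N.E u ≠ 1) (hv : inDeg N.E v ≠ 1)
    (huv : tleaf N h u = tleaf N h v) : u = v := by
  rcases paths_meet N h (Fintype.card V + Fintype.card V) _ _ u v le_rfl huv with ⟨k, hk⟩ | ⟨k, hk⟩
  · exact on_path_start N h hv k u hk
  · exact (on_path_start N h hu k v hk).symm

lemma sum_indeg_eq_sum_outdeg (E : V → V → Bool) :
    ∑ v, inDeg E v = ∑ v, outDeg E v := by
  simp only [inDeg, outDeg, Finset.card_filter]
  exact Finset.sum_comm

lemma card_leaves (N : PhyloNetwork V n) :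
    (Finset.univ.filter (fun v => outDeg N.E v = 0)).card = n := by
  have hbij : (Finset.univ : Finset (Fin n)).card =
      (Finset.univ.filter (fun v => outDeg N.E v = 0)).card :=
    Finset.card_bij (fun (i : Fin n) (_ : i ∈ Finset.univ) => N.leaf i)
      (fun i _ => by simp [N.leaf_isLeaf i])
      (fun i _ j _ hij => N.leaf_inj hij)
      (fun v hv => by
        obtain ⟨i, hi⟩ := N.leaf_surj v (by simpa using hv)
        exact ⟨i, Finset.mem_univ i, hi⟩)
  simpa using hbij.symm

lemma filter_split (p q : V → Prop) [DecidablePred p] [DecidablePred q] :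
    (Finset.univ.filter (fun v => p v ∧ q v)).card +
      (Finset.univ.filter (fun v => p v ∧ ¬ q v)).card =
      (Finset.univ.filter p).card := by
  rw [← Finset.filter_filter, ← Finset.filter_filter,
    Finset.card_filter_add_card_filter_not]

end Aux

/-- A tree-child phylogenetic network with `n` leaves, no out-degree 1 tree node, and
all hybrid nodes of in-degree at most `m`, has at most `(m+2)(n-1)+1` nodes. -/
theorem card_nodes_le_of_bounded_indeg {V : Type*} [Fintype V] {n m : ℕ}
    (N : PhyloNetwork V n) (h : TreeChild N)
    (hout : ∀ v : V, inDeg N.E v ≤ 1 → outDeg N.E v ≠ 1)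
    (hm : ∀ v : V, 1 < inDeg N.E v → inDeg N.E v ≤ m) :
    Fintype.card V ≤ (m + 2) * (n - 1) + 1 := by
  classical
  obtain ⟨r, hr, hr_uniq⟩ := N.rooted
  set p : V → Prop := fun v => inDeg N.E v ≤ 1 with hp
  set q : V → Prop := fun v => outDeg N.E v = 0 with hq
  set L0 := Finset.univ.filter q with hL0
  set Tre := Finset.univ.filter p with hTre
  set Hyb := Finset.univ.filter (fun v => ¬ p v) with hHyb
  -- number of leaves
  have hcardL0 : L0.card = n := card_leaves N
  have hn1 : 1 ≤ n := by
    have : tleaf N h r ∈ L0 := by simp [hL0, hq, tleaf_sink N h r]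
    have := Finset.card_pos.mpr ⟨_, this⟩
    omega
  -- hybrid count bound : Hyb.card + 1 ≤ n
  have hrTre : r ∈ Tre := by simp [hTre, hp, hr]
  have hrHyb : r ∉ Hyb := by simp [hHyb, hp, hr]
  have hHybn : Hyb.card + 1 ≤ n := by
    have hmaps : ∀ v ∈ insert r Hyb, tleaf N h v ∈ L0 := by
      intro v _; simp [hL0, hq, tleaf_sink N h v]
    have hinj : Set.InjOn (tleaf N h) (insert r Hyb : Finset V) := by
      intro u hu v hv huv
      have hu' : inDeg N.E u ≠ 1 := by
        rcases Finset.mem_insert.mp hu with h' | h'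
        · rw [h', hr]; omega
        · have := (Finset.mem_filter.mp h').2
          simp only [hp] at this; omega
      have hv' : inDeg N.E v ≠ 1 := by
        rcases Finset.mem_insert.mp hv with h' | h'
        · rw [h', hr]; omega
        · have := (Finset.mem_filter.mp h').2
          simp only [hp] at this; omega
      exact tleaf_inj N h hu' hv' huv
    have := Finset.card_le_card_of_injOn _ hmaps hinj
    rw [Finset.card_insert_of_notMem hrHyb, hcardL0] at this
    exact this
  -- partition identities
  have hTH : Tre.card + Hyb.card = Fintype.card V := by
    rw [hTre, hHyb, Finset.card_filter_add_card_filter_not, Finset.card_univ]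
  set a := (Finset.univ.filter (fun v => p v ∧ ¬ q v)).card with ha
  set c := (Finset.univ.filter (fun v => p v ∧ q v)).card with hc
  set b := (Finset.univ.filter (fun v => ¬ p v ∧ ¬ q v)).card with hb
  set d := (Finset.univ.filter (fun v => ¬ p v ∧ q v)).card with hd
  have hsplitT : c + a = Tre.card := filter_split p q
  have hsplitH : d + b = Hyb.card := by
    have := filter_split (fun v => ¬ p v) q
    simpa using this
  have hsplitL : c + d = n := by
    have h1 := filter_split q p
    have e1 : (Finset.univ.filter (fun v => q v ∧ p v)) =
        (Finset.univ.filter (fun v => p v ∧ q v)) := by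
      ext v; simp [and_comm]
    have e2 : (Finset.univ.filter (fun v => q v ∧ ¬ p v)) =
        (Finset.univ.filter (fun v => ¬ p v ∧ q v)) := by
      ext v; simp [and_comm]
    rw [e1, e2, ← hc, ← hd, ← hL0, hcardL0] at h1
    exact h1
  -- edge counting
  have hsum : ∑ v, inDeg N.E v = ∑ v, outDeg N.E v := sum_indeg_eq_sum_outdeg N.E
  -- split the in-degree sum
  have hsumin : ∑ v ∈ Tre, inDeg N.E v + ∑ v ∈ Hyb, inDeg N.E v = ∑ v, inDeg N.E v := by
    rw [hTre, hHyb]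
    exact Finset.sum_filter_add_sum_filter_not _ _ _
  have hsumout : ∑ v ∈ Tre, outDeg N.E v + ∑ v ∈ Hyb, outDeg N.E v = ∑ v, outDeg N.E v := by
    rw [hTre, hHyb]
    exact Finset.sum_filter_add_sum_filter_not _ _ _
  -- in-degree bounds
  have hinTre : ∑ v ∈ Tre, inDeg N.E v + 1 ≤ Tre.card := by
    have h1 : ∑ v ∈ Tre.erase r, inDeg N.E v + inDeg N.E r = ∑ v ∈ Tre, inDeg N.E v :=
      Finset.sum_erase_add _ _ hrTre
    have h2 : ∑ v ∈ Tre.erase r, inDeg N.E v ≤ (Tre.erase r).card * 1 := by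
      apply Finset.sum_le_card_nsmul
      intro x hx
      have := (Finset.mem_filter.mp (Finset.mem_of_mem_erase hx)).2
      simpa [hp] using this
    have h3 : (Tre.erase r).card = Tre.card - 1 := Finset.card_erase_of_mem hrTre
    have h4 : 1 ≤ Tre.card := Finset.card_pos.mpr ⟨r, hrTre⟩
    omega
  have hinHyb : ∑ v ∈ Hyb, inDeg N.E v ≤ Hyb.card * m := by
    apply Finset.sum_le_card_nsmul
    intro x hx
    have := (Finset.mem_filter.mp hx).2
    simp only [hp, not_le] at this
    exact hm x this
  -- out-degree bounds
  have houtTre : 2 * a ≤ ∑ v ∈ Tre, outDeg N.E v := by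
    have hsplit : ∑ v ∈ Tre.filter (fun v => ¬ q v), outDeg N.E v ≤ ∑ v ∈ Tre, outDeg N.E v :=
      Finset.sum_le_sum_of_subset (Finset.filter_subset _ _)
    have heq : Tre.filter (fun v => ¬ q v) = Finset.univ.filter (fun v => p v ∧ ¬ q v) := by
      rw [hTre, Finset.filter_filter]
    have h2 : (Tre.filter (fun v => ¬ q v)).card * 2 ≤
        ∑ v ∈ Tre.filter (fun v => ¬ q v), outDeg N.E v := by
      rw [← smul_eq_mul]
      apply Finset.card_nsmul_le_sum
      intro x hx
      have hx1 := Finset.mem_filter.mp (Finset.mem_of_mem_filter x hx)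
      have hx2 := (Finset.mem_filter.mp hx).2
      simp only [hp] at hx1
      simp only [hq] at hx2
      have := hout x hx1.2
      omega
    rw [heq, ← ha] at h2
    rw [heq] at hsplit
    omega
  have houtHyb : b ≤ ∑ v ∈ Hyb, outDeg N.E v := by
    have hsplit : ∑ v ∈ Hyb.filter (fun v => ¬ q v), outDeg N.E v ≤ ∑ v ∈ Hyb, outDeg N.E v :=
      Finset.sum_le_sum_of_subset (Finset.filter_subset _ _)
    have heq : Hyb.filter (fun v => ¬ q v) = Finset.univ.filter (fun v => ¬ p v ∧ ¬ q v) := by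
      rw [hHyb, Finset.filter_filter]
    have h2 : (Hyb.filter (fun v => ¬ q v)).card * 1 ≤
        ∑ v ∈ Hyb.filter (fun v => ¬ q v), outDeg N.E v := by
      rw [← smul_eq_mul]
      apply Finset.card_nsmul_le_sum
      intro x hx
      have hx2 := (Finset.mem_filter.mp hx).2
      simp only [hq] at hx2
      omega
    rw [heq, ← hb] at h2
    rw [heq] at hsplit
    omega
  -- assemble
  have hmul : Hyb.card * m ≤ (n - 1) * m := Nat.mul_le_mul_right m (by omega)
  have hgoal : (m + 2) * (n - 1) + 1 = (n - 1) * m + 2 * (n - 1) + 1 := by ring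
  rw [hgoal]
  set P := (n - 1) * m with hP
  set Q := Hyb.card * m with hQ
  omega
end

section
/- Let N=(V,E) be a tree-child phylogenetic network and let u,v∈V. If μ(u) > μ(v) in the product partial order on ℕ^n (that is, μ(u) ≥ μ(v) and μ(u) ≠ μ(v)), then there exists a directed path from u to v. -/
/-- The μ-vector of a node: its `i`-th entry is the number of directed paths from `u`
to the leaf labeled `i`. -/
noncomputable def mu {V : Type*} [Fintype V] {n : ℕ} (N : PhyloNetwork V n) (u : V) :
    Fin n → ℕ :=
  fun i => Set.ncard {p : List V | IsWalk N.E u (N.leaf i) p}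

section Aux

variable {V : Type*} [Fintype V]

/-- In an acyclic graph, the set of walks between two fixed nodes is finite. -/
lemma walk_finite {E : V → V → Bool} (hac : Acyclic E) (a b : V) :
    {p : List V | IsWalk E a b p}.Finite := by
  apply (List.finite_length_le V (Fintype.card V)).subset
  rintro p ⟨_, _, hchain⟩
  show p.length ≤ Fintype.card V
  have hnd : p.Nodup := by
    by_contra hnd
    obtain ⟨x, hx⟩ := List.exists_duplicate_iff_not_nodup.mpr hnd
    have hsub : List.Sublist [x, x] p := List.duplicate_iff_sublist.mp hx
    have htg : p.Chain' (fun a b => Relation.TransGen (fun a b => E a b = true) a b) :=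
      hchain.imp fun _ _ h => Relation.TransGen.single h
    have h2 := htg.sublist hsub
    rw [List.isChain_pair] at h2
    exact hac x h2
  exact hnd.length_le_card

lemma reaches_of_reflTransGen {E : V → V → Bool} {a b : V}
    (h : Relation.ReflTransGen (fun a b => E a b = true) a b) : Reaches E a b := by
  induction h using Relation.ReflTransGen.head_induction_on with
  | refl => exact ⟨[b], rfl, rfl, List.isChain_singleton b⟩
  | head hac hd ih =>
    rename_i a' c
    obtain ⟨p, h1, h2, h3⟩ := ih
    cases p with
    | nil => simp at h1
    | cons x p' =>
      have hx : x = c := by simpa using h1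
      refine ⟨a' :: x :: p', rfl, ?_, ?_⟩
      · rw [List.getLast?_cons_cons]; exact h2
      · exact List.isChain_cons_cons.mpr ⟨by rw [hx]; exact hac, h3⟩

lemma reflTransGen_of_walk {E : V → V → Bool} :
    ∀ p : List V, ∀ a b : V, IsWalk E a b p →
      Relation.ReflTransGen (fun a b => E a b = true) a b := by
  intro p
  induction p with
  | nil => rintro a b ⟨h1, -, -⟩; simp at h1
  | cons x q ih =>
    rintro a b ⟨h1, h2, h3⟩
    have hxa : x = a := by simpa using h1
    subst hxa
    cases q with
    | nil =>
      have : x = b := by simpa using h2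
      subst this; exact Relation.ReflTransGen.refl
    | cons y q' =>
      replace h3 := List.isChain_cons_cons.mp h3
      rw [List.getLast?_cons_cons] at h2
      exact Relation.ReflTransGen.head h3.1 (ih y b ⟨rfl, h2, h3.2⟩)

lemma mu_le_of_edge {n : ℕ} (N : PhyloNetwork V n) {v w : V} (hvw : N.E v w = true)
    (i : Fin n) : mu N w i ≤ mu N v i := by
  refine Set.ncard_le_ncard_of_injOn (fun p => v :: p) ?_ ?_
    (walk_finite N.acyclic v (N.leaf i))
  · rintro p ⟨h1, h2, h3⟩
    obtain ⟨p', rfl⟩ : ∃ t, p = w :: t := by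
      cases p with
      | nil => simp at h1
      | cons x t => have : x = w := by simpa using h1
                    exact ⟨t, by rw [this]⟩
    refine ⟨rfl, ?_, ?_⟩
    · rw [List.getLast?_cons_cons]; exact h2
    · exact List.isChain_cons_cons.mpr ⟨hvw, h3⟩
  · intro p _ q _ hpq
    simpa using hpq

lemma mu_le_of_reflTransGen {n : ℕ} (N : PhyloNetwork V n) {v u : V}
    (hvu : Relation.ReflTransGen (fun a b => N.E a b = true) v u) (i : Fin n) :
    mu N u i ≤ mu N v i := by
  induction hvu with
  | refl => exact le_rfl
  | tail _ hbc ih => exact le_trans (mu_le_of_edge N hbc i) ih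

lemma parent_unique_s9 {E : V → V → Bool} {c y u : V} (h1 : E y c = true) (h2 : E u c = true)
    (hc : inDeg E c ≤ 1) : y = u := by
  have hy : y ∈ Finset.univ.filter (fun w => E w c = true) := by simp [h1]
  have hu : u ∈ Finset.univ.filter (fun w => E w c = true) := by simp [h2]
  exact Finset.card_le_one.mp hc _ hy _ hu

/-- Every node of a tree-child network has a "tree path" to a leaf: a path
all of whose nodes after the first have in-degree at most one. -/
lemma exists_treePath {n : ℕ} (N : PhyloNetwork V n) (h : TreeChild N) (v : V) :
    ∃ t, Relation.ReflTransGen (fun a b => N.E a b = true ∧ inDeg N.E b ≤ 1) v t ∧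
      outDeg N.E t = 0 := by
  have hwf : WellFounded (fun a b => Relation.TransGen (fun x y => N.E x y = true) b a) := by
    haveI : IsIrrefl V (fun a b => Relation.TransGen (fun x y => N.E x y = true) b a) :=
      ⟨fun x hx => N.acyclic x hx⟩
    haveI : IsTrans V (fun a b => Relation.TransGen (fun x y => N.E x y = true) b a) :=
      ⟨fun _ _ _ hab hbc => Relation.TransGen.trans hbc hab⟩
    exact Finite.wellFounded_of_trans_of_irrefl _
  refine hwf.induction
    (C := fun v => ∃ t, Relation.ReflTransGen
      (fun a b => N.E a b = true ∧ inDeg N.E b ≤ 1) v t ∧ outDeg N.E t = 0) v ?_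
  intro x ih
  by_cases hx : outDeg N.E x = 0
  · exact ⟨x, Relation.ReflTransGen.refl, hx⟩
  · obtain ⟨c, hc, hcin⟩ := h x (Nat.pos_of_ne_zero hx)
    obtain ⟨t, ht1, ht2⟩ := ih c (Relation.TransGen.single hc)
    exact ⟨t, Relation.ReflTransGen.head ⟨hc, hcin⟩ ht1, ht2⟩

/-- If there is a tree path from `v` to `t`, then any node having a path to `t`
is comparable with `v`. -/
lemma comparable_of_treePath {E : V → V → Bool} {v t x : V}
    (hp : Relation.ReflTransGen (fun a b => E a b = true ∧ inDeg E b ≤ 1) v t)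
    (hx : Relation.ReflTransGen (fun a b => E a b = true) x t) :
    Relation.ReflTransGen (fun a b => E a b = true) x v ∨
      Relation.ReflTransGen (fun a b => E a b = true) v x := by
  induction hp using Relation.ReflTransGen.head_induction_on with
  | refl => exact Or.inl hx
  | head hvc hd ih =>
    rename_i a c
    obtain ⟨hvc, hcin⟩ := hvc
    rcases ih with hxc | hcx
    · rcases Relation.ReflTransGen.cases_tail hxc with rfl | ⟨y, hxy, hyc⟩
      · exact Or.inr (Relation.ReflTransGen.single hvc)
      · have : y = a := parent_unique_s9 hyc hvc hcin
        exact Or.inl (this ▸ hxy)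
    · exact Or.inr (Relation.ReflTransGen.head hvc hcx)

end Aux

/-- In a tree-child phylogenetic network, if `μ(u) > μ(v)` in the product partial
order, then there is a directed path from `u` to `v`. -/
theorem reaches_of_mu_lt {V : Type*} [Fintype V] {n : ℕ} (N : PhyloNetwork V n)
    (h : TreeChild N) (u v : V) (hlt : mu N v < mu N u) :
    Reaches N.E u v := by
  have hle : mu N v ≤ mu N u := le_of_lt hlt
  obtain ⟨t, htp, ht0⟩ := exists_treePath N h v
  obtain ⟨i, rfl⟩ := N.leaf_surj t ht0
  have hvt : Relation.ReflTransGen (fun a b => N.E a b = true) v (N.leaf i) :=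
    Relation.ReflTransGen.mono (fun a b (hab : N.E a b = true ∧ inDeg N.E b ≤ 1) => hab.1) _ _ htp
  have h1 : 1 ≤ mu N v i := by
    obtain ⟨p, hp⟩ := reaches_of_reflTransGen hvt
    have hfin := walk_finite N.acyclic v (N.leaf i)
    have : 0 < mu N v i := by
      rw [mu]; exact (Set.ncard_pos hfin).mpr ⟨p, hp⟩
    omega
  have h2 : 1 ≤ mu N u i := le_trans h1 (hle i)
  have hne : {p : List V | IsWalk N.E u (N.leaf i) p}.Nonempty := by
    apply Set.nonempty_of_ncard_ne_zero
    have : mu N u i ≠ 0 := by omega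
    exact this
  obtain ⟨p, hp⟩ := hne
  have hut : Relation.ReflTransGen (fun a b => N.E a b = true) u (N.leaf i) :=
    reflTransGen_of_walk p u _ hp
  rcases comparable_of_treePath htp hut with huv | hvu
  · exact reaches_of_reflTransGen huv
  · exfalso
    have hmle : mu N u ≤ mu N v := fun j => mu_le_of_reflTransGen N hvu j
    exact absurd hmle (not_le_of_gt hlt)
end

section
/- For every pair of phylogenetic trees T_1, T_2 on the same set of taxa S, the μ-distance equals the Robinson-Foulds distance: d_μ(T_1,T_2) = d_RF(T_1,T_2). -/
/-- The μ-representation of a network: the multiset of μ-vectors of all its nodes. -/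
noncomputable def muRep {V : Type*} [Fintype V] {n : ℕ} (N : PhyloNetwork V n) :
    Multiset (Fin n → ℕ) :=
  (Finset.univ.val : Multiset V).map (mu N)

/-- The μ-distance: the cardinality of the multiset symmetric difference of the
μ-representations. -/
noncomputable def muDist {V₁ V₂ : Type*} [Fintype V₁] [Fintype V₂] {n : ℕ}
    (N₁ : PhyloNetwork V₁ n) (N₂ : PhyloNetwork V₂ n) : ℕ :=
  Multiset.card (muRep N₁ - muRep N₂) + Multiset.card (muRep N₂ - muRep N₁)

/-- The cluster of a node: the set of labels of leaves that are descendants of it. -/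
def cluster {V : Type*} [Fintype V] {n : ℕ} (N : PhyloNetwork V n) (v : V) :
    Set (Fin n) :=
  {i | Reaches N.E v (N.leaf i)}

/-- The set of bipartitions associated to the arcs of a network: for every arc
`(u,v)`, the pair `(C_L(v), S ∖ C_L(v))`. -/
def bipartitions {V : Type*} [Fintype V] {n : ℕ} (N : PhyloNetwork V n) :
    Set (Set (Fin n) × Set (Fin n)) :=
  {pr | ∃ u v : V, N.E u v = true ∧ pr = (cluster N v, (cluster N v)ᶜ)}


set_option linter.unusedSectionVars false

section WalkLemmas

variable {V : Type*} {E : V → V → Bool} {u v x y : V} {p q : List V}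

lemma isWalk_reverse (h : IsWalk E u v p) :
    IsWalk (fun a b => E b a) v u p.reverse := by
  obtain ⟨h1, h2, h3⟩ := h
  refine ⟨?_, ?_, ?_⟩
  · rwa [List.head?_reverse]
  · rwa [List.getLast?_reverse]
  · rw [List.Chain', List.isChain_reverse]; exact h3

lemma isWalk_reverse_iff : IsWalk (fun a b => E b a) v u p.reverse ↔ IsWalk E u v p := by
  constructor
  · intro h
    have := isWalk_reverse (E := fun a b => E b a) h
    simpa using this
  · exact isWalk_reverse

lemma isWalk_singleton : IsWalk E u v [x] ↔ x = u ∧ x = v := by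
  simp [IsWalk, List.Chain', List.isChain_singleton]

lemma isWalk_cons_cons : IsWalk E u v (x :: y :: p) ↔
    x = u ∧ E x y = true ∧ IsWalk E y v (y :: p) := by
  simp only [IsWalk, List.head?_cons, Option.some.injEq, List.getLast?_cons_cons,
    List.Chain', List.isChain_cons_cons]
  tauto

lemma IsWalk.reflTransGen (h : IsWalk E u v p) :
    Relation.ReflTransGen (fun a b => E a b = true) u v := by
  induction p generalizing u with
  | nil => simp [IsWalk] at h
  | cons a q ih =>
    cases q with
    | nil =>
      obtain ⟨rfl, rfl⟩ := isWalk_singleton.mp h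
      exact Relation.ReflTransGen.refl
    | cons b q' =>
      obtain ⟨rfl, hE, hw⟩ := isWalk_cons_cons.mp h
      exact Relation.ReflTransGen.head hE (ih hw)

lemma reaches_iff_reflTransGen :
    Reaches E u v ↔ Relation.ReflTransGen (fun a b => E a b = true) u v := by
  constructor
  · rintro ⟨p, hp⟩; exact hp.reflTransGen
  · intro h
    induction h with
    | refl => exact ⟨[u], by simp [IsWalk, List.Chain', List.isChain_singleton]⟩
    | tail hab hbc ih =>
      obtain ⟨p, h1, h2, h3⟩ := ih
      rename_i b c
      have hpne : p ≠ [] := by rintro rfl; simp at h1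
      refine ⟨p ++ [c], ?_, ?_, ?_⟩
      · rwa [List.head?_append_of_ne_nil _ hpne]
      · exact List.getLast?_concat
      · refine List.IsChain.append h3 (List.isChain_singleton c) ?_
        intro a ha b' hb'
        simp at hb'
        subst hb'
        rw [h2] at ha
        simp at ha
        subst ha
        exact hbc

lemma Reaches.refl : Reaches E u u := ⟨[u], by simp [IsWalk, List.Chain', List.isChain_singleton]⟩

lemma Reaches.trans (h1 : Reaches E u v) (h2 : Reaches E v x) : Reaches E u x := by
  rw [reaches_iff_reflTransGen] at *
  exact h1.trans h2

lemma Reaches.head (h : E u v = true) (h2 : Reaches E v x) : Reaches E u x := by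
  rw [reaches_iff_reflTransGen] at *
  exact Relation.ReflTransGen.head h h2

lemma walk_unique_of_functional (hfun : ∀ a b c, E a b = true → E a c = true → b = c)
    (hacyc : Acyclic E) (hp : IsWalk E u v p) (hq : IsWalk E u v q) : p = q := by
  induction p generalizing q u with
  | nil => simp [IsWalk] at hp
  | cons a p' ih =>
    have ha : a = u := by simpa using hp.1
    subst ha
    obtain ⟨b, q', rfl⟩ : ∃ b q', q = b :: q' := by
      cases q with
      | nil => simp [IsWalk] at hq
      | cons b q' => exact ⟨b, q', rfl⟩
    have hb : b = a := by simpa using hq.1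
    subst hb
    cases p' with
    | nil =>
      obtain ⟨_, rfl⟩ := isWalk_singleton.mp hp
      cases q' with
      | nil => rfl
      | cons c q'' =>
        obtain ⟨_, hE, hw⟩ := isWalk_cons_cons.mp hq
        exact absurd (Relation.TransGen.head' (r := fun a b => E a b = true) hE hw.reflTransGen) (hacyc _)
    | cons c p'' =>
      obtain ⟨_, hE, hw⟩ := isWalk_cons_cons.mp hp
      cases q' with
      | nil =>
        obtain ⟨_, rfl⟩ := isWalk_singleton.mp hq
        exact absurd (Relation.TransGen.head' (r := fun a b => E a b = true) hE hw.reflTransGen) (hacyc _)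
      | cons c' q'' =>
        obtain ⟨_, hE', hw'⟩ := isWalk_cons_cons.mp hq
        have hcc : c = c' := hfun _ c c' hE hE'
        subst hcc
        rw [ih hw hw']

lemma reaches_comparable_of_functional (hfun : ∀ a b c, E a b = true → E a c = true → b = c)
    (hp : IsWalk E u x p) (hq : IsWalk E u y q) : Reaches E x y ∨ Reaches E y x := by
  induction p generalizing q u with
  | nil => simp [IsWalk] at hp
  | cons a p' ih =>
    have ha : a = u := by simpa using hp.1
    subst ha
    cases p' with
    | nil =>
      obtain ⟨_, rfl⟩ := isWalk_singleton.mp hp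
      exact Or.inl ⟨q, hq⟩
    | cons c p'' =>
      obtain ⟨_, hE, hw⟩ := isWalk_cons_cons.mp hp
      obtain ⟨b, q', rfl⟩ : ∃ b q', q = b :: q' := by
        cases q with
        | nil => simp [IsWalk] at hq
        | cons b q' => exact ⟨b, q', rfl⟩
      have hb : b = a := by simpa using hq.1
      subst hb
      cases q' with
      | nil =>
        obtain ⟨_, rfl⟩ := isWalk_singleton.mp hq
        exact Or.inr ⟨_ :: c :: p'', hp⟩
      | cons c' q'' =>
        obtain ⟨_, hE', hw'⟩ := isWalk_cons_cons.mp hq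
        have hcc : c = c' := hfun _ c c' hE hE'
        subst hcc
        exact ih hw hw'

end WalkLemmas

section Deg

variable {V : Type*} [Fintype V] {E : V → V → Bool}

lemma flip_functional (ht : ∀ v, inDeg E v ≤ 1) :
    ∀ a b c : V, E a c = true → E b c = true → a = b := by
  intro a b c ha hb
  have := Finset.card_le_one.mp (ht c)
  exact this a (by simp [ha]) b (by simp [hb])

lemma functional_of_outDeg (ht : ∀ v, outDeg E v ≤ 1) :
    ∀ a b c : V, E a b = true → E a c = true → b = c := by
  intro a b c hb hc
  have := Finset.card_le_one.mp (ht a)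
  exact this b (by simp [hb]) c (by simp [hc])

lemma acyclic_flip (h : Acyclic E) : Acyclic (fun a b => E b a) := by
  intro v hv
  exact h v ((Relation.transGen_swap (r := fun a b => E a b = true)).mp hv)

lemma exists_edge_of_outDeg_ne_zero {u : V} (h : outDeg E u ≠ 0) :
    ∃ w, E u w = true := by
  obtain ⟨w, hw⟩ := Finset.card_ne_zero.mp h |>.exists_mem
  exact ⟨w, by simpa using hw⟩

lemma exists_edge_of_inDeg_ne_zero {v : V} (h : inDeg E v ≠ 0) :
    ∃ u, E u v = true := by
  obtain ⟨u, hu⟩ := Finset.card_ne_zero.mp h |>.exists_mem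
  exact ⟨u, by simpa using hu⟩

lemma wf_flip (h : Acyclic E) : WellFounded (fun a b : V => E b a = true) := by
  have hir : IsIrrefl V (Relation.TransGen (Function.swap (fun a b => E a b = true))) :=
    ⟨fun v hv => acyclic_flip h v hv⟩
  have := Finite.wellFounded_of_trans_of_irrefl
    (Relation.TransGen (Function.swap (fun a b => E a b = true)))
  exact Subrelation.wf (fun hab => Relation.TransGen.single
    (r := Function.swap (fun a b => E a b = true)) hab) this

lemma wf_fwd (h : Acyclic E) : WellFounded (fun a b : V => E a b = true) := by
  have hir : IsIrrefl V (Relation.TransGen (fun a b => E a b = true)) := ⟨h⟩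
  have := Finite.wellFounded_of_trans_of_irrefl (Relation.TransGen (fun a b => E a b = true))
  exact Subrelation.wf (fun hab => Relation.TransGen.single
    (r := fun a b => E a b = true) hab) this

end Deg

section TreeLemmas
open Classical in
noncomputable def indvec {n : ℕ} (C : Set (Fin n)) : Fin n → ℕ :=
  fun i => if i ∈ C then 1 else 0

lemma indvec_injective {n : ℕ} : Function.Injective (indvec (n := n)) := by
  intro C D h
  ext i
  constructor <;> intro hi
  · by_contra hD
    have := congrFun h i
    simp [indvec, hi, hD] at this
  · by_contra hC
    have := congrFun h i
    simp [indvec, hi, hC] at this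

variable {V : Type*} [Fintype V] {n : ℕ} (T : PhyloNetwork V n)

lemma tree_walk_unique (ht : ∀ v, inDeg T.E v ≤ 1) {u v : V} {p q : List V}
    (hp : IsWalk T.E u v p) (hq : IsWalk T.E u v q) : p = q := by
  have h1 := isWalk_reverse hp
  have h2 := isWalk_reverse hq
  have := walk_unique_of_functional (E := fun a b => T.E b a)
    (fun a b c hab hac => flip_functional ht b c a hab hac)
    (acyclic_flip T.acyclic) h1 h2
  exact List.reverse_injective this

lemma tree_comparable (ht : ∀ v, inDeg T.E v ≤ 1) {x y z : V}
    (hx : Reaches T.E x z) (hy : Reaches T.E y z) :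
    Reaches T.E x y ∨ Reaches T.E y x := by
  obtain ⟨p, hp⟩ := hx
  obtain ⟨q, hq⟩ := hy
  have h1 := isWalk_reverse hp
  have h2 := isWalk_reverse hq
  have := reaches_comparable_of_functional (E := fun a b => T.E b a)
    (fun a b c hab hac => flip_functional ht b c a hab hac) h1 h2
  rcases this with ⟨w, hw⟩ | ⟨w, hw⟩
  · exact Or.inr ⟨w.reverse, by exact isWalk_reverse hw⟩
  · exact Or.inl ⟨w.reverse, by exact isWalk_reverse hw⟩

lemma reaches_leaf : ∀ v : V, ∃ i, Reaches T.E v (T.leaf i) := by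
  intro v
  induction v using (wf_flip T.acyclic).induction with
  | _ v ih =>
    by_cases h0 : outDeg T.E v = 0
    · obtain ⟨i, hi⟩ := T.leaf_surj v h0
      exact ⟨i, hi ▸ Reaches.refl⟩
    · obtain ⟨w, hw⟩ := exists_edge_of_outDeg_ne_zero h0
      obtain ⟨i, hi⟩ := ih w hw
      exact ⟨i, Reaches.head hw hi⟩

lemma root_reaches {r : V} (hu : ∀ w, inDeg T.E w = 0 → w = r) :
    ∀ v : V, Reaches T.E r v := by
  intro v
  induction v using (wf_fwd T.acyclic).induction with
  | _ v ih =>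
    by_cases h0 : inDeg T.E v = 0
    · exact (hu v h0) ▸ Reaches.refl
    · obtain ⟨u, huv⟩ := exists_edge_of_inDeg_ne_zero h0
      exact (ih u huv).trans ⟨[u, v], by simp [IsWalk, huv, List.Chain', List.isChain_pair]⟩

lemma mu_eq_indvec (ht : ∀ v, inDeg T.E v ≤ 1) (u : V) :
    mu T u = indvec (cluster T u) := by
  funext i
  show Set.ncard _ = _
  by_cases h : Reaches T.E u (T.leaf i)
  · obtain ⟨p, hp⟩ := h
    have hset : {q : List V | IsWalk T.E u (T.leaf i) q} = {p} := by
      ext q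
      simp only [Set.mem_setOf_eq, Set.mem_singleton_iff]
      exact ⟨fun hq => tree_walk_unique T ht hq hp, fun h => h ▸ hp⟩
    rw [hset, Set.ncard_singleton]
    have hm : i ∈ cluster T u := ⟨p, hp⟩
    simp [indvec, hm]
  · have hset : {q : List V | IsWalk T.E u (T.leaf i) q} = ∅ := by
      ext q
      simp only [Set.mem_setOf_eq, Set.mem_empty_iff_false, iff_false]
      exact fun hq => h ⟨q, hq⟩
    rw [hset, Set.ncard_empty]
    have hm : i ∉ cluster T u := h
    simp [indvec, hm]

lemma sibling_eq (ht : ∀ v, inDeg T.E v ≤ 1) {u w w' : V}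
    (h1 : T.E u w = true) (h2 : T.E u w' = true) (h3 : Reaches T.E w w') : w = w' := by
  obtain ⟨p, hp⟩ := h3
  have hcons : IsWalk T.E u w' (u :: p) := by
    obtain ⟨a, p', rfl⟩ : ∃ a p', p = a :: p' := by
      cases p with
      | nil => simp [IsWalk] at hp
      | cons a p' => exact ⟨a, p', rfl⟩
    have ha : a = w := by simpa using hp.1
    subst ha
    exact isWalk_cons_cons.mpr ⟨rfl, h1, hp⟩
  have hpair : IsWalk T.E u w' [u, w'] := by
    refine isWalk_cons_cons.mpr ⟨rfl, h2, ?_⟩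
    simp [IsWalk, List.Chain', List.isChain_singleton]
  have := tree_walk_unique T ht hcons hpair
  have hp1 : p = [w'] := by injection this
  have : w = w' := by
    rw [hp1] at hp
    simpa using (isWalk_singleton.mp hp).1.symm
  exact this

lemma cluster_strict (ht : ∀ v, inDeg T.E v ≤ 1) (ho : ∀ v, outDeg T.E v ≠ 1)
    {u v : V} (h : Reaches T.E u v) (hne : u ≠ v) :
    ∃ i, i ∈ cluster T u ∧ i ∉ cluster T v := by
  obtain ⟨p, hp⟩ := h
  obtain ⟨a, p', rfl⟩ : ∃ a p', p = a :: p' := by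
    cases p with
    | nil => simp [IsWalk] at hp
    | cons a p' => exact ⟨a, p', rfl⟩
  have ha : a = u := by simpa using hp.1
  subst ha
  obtain ⟨w, p'', rfl⟩ : ∃ w p'', p' = w :: p'' := by
    cases p' with
    | nil => exact absurd (isWalk_singleton.mp hp).2 hne
    | cons w p'' => exact ⟨w, p'', rfl⟩
  obtain ⟨_, hE, hw⟩ := isWalk_cons_cons.mp hp
  have hwv : Reaches T.E w v := ⟨w :: p'', hw⟩
  -- u has another child w'
  have hocard : 1 < outDeg T.E a := by
    rcases Nat.lt_or_ge 1 (outDeg T.E a) with h | h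
    · exact h
    · exfalso
      interval_cases h' : outDeg T.E a
      · exact absurd hE (by
          have : (Finset.univ.filter (fun x => T.E a x = true)) = ∅ :=
            Finset.card_eq_zero.mp h'
          intro hh
          have : w ∈ (∅ : Finset V) := this ▸ (by simp [hh])
          simp at this)
      · exact ho a h'
  obtain ⟨w', hw'mem, hw'ne⟩ := Finset.exists_mem_ne hocard w
  have hE' : T.E a w' = true := by simpa using hw'mem
  obtain ⟨i, hi⟩ := reaches_leaf T w'
  refine ⟨i, Reaches.head hE' hi, ?_⟩
  intro hvi
  have hwi : Reaches T.E w (T.leaf i) := hwv.trans hvi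
  rcases tree_comparable T ht hwi hi with hcmp | hcmp
  · exact hw'ne (sibling_eq T ht hE hE' hcmp).symm
  · exact hw'ne (sibling_eq T ht hE' hE hcmp)

lemma cluster_injective (ht : ∀ v, inDeg T.E v ≤ 1) (ho : ∀ v, outDeg T.E v ≠ 1) :
    Function.Injective (cluster T) := by
  intro u v h
  by_contra hne
  obtain ⟨i, hi⟩ := reaches_leaf T u
  have hiu : i ∈ cluster T u := hi
  have hiv : i ∈ cluster T v := h ▸ hiu
  rcases tree_comparable T ht hi hiv with hcmp | hcmp
  · obtain ⟨j, hj1, hj2⟩ := cluster_strict T ht ho hcmp hne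
    exact hj2 (h ▸ hj1)
  · obtain ⟨j, hj1, hj2⟩ := cluster_strict T ht ho hcmp (Ne.symm hne)
    exact hj2 (h ▸ hj1)

lemma exists_cluster_univ {V : Type*} [Fintype V] {n : ℕ} (T : PhyloNetwork V n) :
    ∃ r : V, cluster T r = Set.univ := by
  obtain ⟨r, hr0, hru⟩ := T.rooted
  exact ⟨r, Set.eq_univ_iff_forall.mpr fun i => root_reaches T hru (T.leaf i)⟩

lemma bipartitions_eq {V : Type*} [Fintype V] {n : ℕ} (T : PhyloNetwork V n)
    (ht : ∀ v, inDeg T.E v ≤ 1) (ho : ∀ v, outDeg T.E v ≠ 1) :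
    bipartitions T
      = (fun C => (C, Cᶜ)) '' (Set.range (cluster T) \ {Set.univ}) := by
  obtain ⟨r, hr0, hru⟩ := T.rooted
  have hroot : cluster T r = Set.univ :=
    Set.eq_univ_iff_forall.mpr fun i => root_reaches T hru (T.leaf i)
  ext pr
  simp only [bipartitions, Set.mem_setOf_eq, Set.mem_image, Set.mem_diff,
    Set.mem_range, Set.mem_singleton_iff]
  constructor
  · rintro ⟨u, v, hE, rfl⟩
    refine ⟨cluster T v, ⟨⟨v, rfl⟩, ?_⟩, rfl⟩
    intro hv
    have hvr : v = r := cluster_injective T ht ho (hv.trans hroot.symm)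
    subst hvr
    have hne : inDeg T.E v ≠ 0 := by
      intro h0
      have : u ∈ Finset.univ.filter (fun w => T.E w v = true) := by simp [hE]
      rw [Finset.card_eq_zero.mp h0] at this
      simp at this
    exact hne hr0
  · rintro ⟨C, ⟨⟨v, rfl⟩, hC⟩, rfl⟩
    have hvr : v ≠ r := fun h => hC (h ▸ hroot)
    have hne : inDeg T.E v ≠ 0 := fun h => hvr (hru v h)
    obtain ⟨u, hu⟩ := exists_edge_of_inDeg_ne_zero hne
    exact ⟨u, v, hu, rfl⟩

lemma card_multiset_sub_of_nodup {α : Type*} [DecidableEq α] {s t : Multiset α}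
    (hs : s.Nodup) : Multiset.card (s - t) = (s.toFinset \ t.toFinset).card := by
  have key : s - t = (s.toFinset \ t.toFinset).val := by
    refine Multiset.ext.mpr fun a => ?_
    rw [Multiset.count_sub]
    have hval : (s.toFinset \ t.toFinset).val.count a
        = if a ∈ s.toFinset \ t.toFinset then 1 else 0 :=
      Multiset.count_eq_of_nodup (s.toFinset \ t.toFinset).nodup
    rw [hval]
    have hcs : s.count a = if a ∈ s then 1 else 0 := Multiset.count_eq_of_nodup hs
    by_cases has : a ∈ s
    · by_cases hat : a ∈ t
      · have h1 : 1 ≤ t.count a := Multiset.one_le_count_iff_mem.mpr hat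
        simp only [hcs, if_pos has, Finset.mem_sdiff, Multiset.mem_toFinset]
        rw [if_neg (by tauto)]
        omega
      · have h0 : t.count a = 0 := Multiset.count_eq_zero.mpr hat
        simp only [hcs, if_pos has, h0, Finset.mem_sdiff, Multiset.mem_toFinset]
        rw [if_pos ⟨has, hat⟩]
    · have h0 : s.count a = 0 := Multiset.count_eq_zero.mpr has
      simp only [h0, Finset.mem_sdiff, Multiset.mem_toFinset]
      rw [if_neg (by tauto)]
      omega
  rw [key]
  rfl

lemma symmDiff_diff_singleton {α : Type*} (A B : Set α) {x : α}
    (hA : x ∈ A) (hB : x ∈ B) :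
    symmDiff (A \ {x}) (B \ {x}) = symmDiff A B := by
  ext y
  simp only [Set.symmDiff_def, Set.sup_eq_union, Set.mem_union, Set.mem_diff,
    Set.mem_singleton_iff]
  by_cases hy : y = x
  · subst hy; simp [hA, hB]
  · simp [hy]

lemma ncard_symmDiff_eq {α : Type*} {A B : Set α} (hA : A.Finite) (hB : B.Finite) :
    (symmDiff A B).ncard = (A \ B).ncard + (B \ A).ncard := by
  rw [Set.symmDiff_def]
  exact Set.ncard_union_eq disjoint_sdiff_sdiff hA.diff hB.diff

lemma muRep_nodup {V : Type*} [Fintype V] {n : ℕ} (T : PhyloNetwork V n)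
    (ht : ∀ v, inDeg T.E v ≤ 1) (ho : ∀ v, outDeg T.E v ≠ 1) : (muRep T).Nodup := by
  refine Multiset.Nodup.map ?_ Finset.univ.nodup
  intro a b hab
  refine cluster_injective T ht ho (indvec_injective ?_)
  rw [← mu_eq_indvec T ht, ← mu_eq_indvec T ht, hab]

lemma muRep_toFinset_coe {V : Type*} [Fintype V] {n : ℕ} (T : PhyloNetwork V n)
    (ht : ∀ v, inDeg T.E v ≤ 1) :
    ((muRep T).toFinset : Set (Fin n → ℕ)) = indvec '' Set.range (cluster T) := by
  classical
  rw [muRep, Multiset.toFinset_map, Finset.val_toFinset, Finset.coe_image,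
    Finset.coe_univ, Set.image_univ]
  have : mu T = indvec ∘ cluster T := funext (mu_eq_indvec T ht)
  rw [this, Set.range_comp]

end TreeLemmas

/-- On phylogenetic trees (rooted, every node of in-degree at most 1, no out-degree 1
node) on the same set of taxa, the μ-distance coincides with the Robinson-Foulds
distance. -/
theorem muDist_eq_RF {V₁ V₂ : Type*} [Fintype V₁] [Fintype V₂] {n : ℕ}
    (T₁ : PhyloNetwork V₁ n) (T₂ : PhyloNetwork V₂ n)
    (htree₁ : ∀ v : V₁, inDeg T₁.E v ≤ 1) (htree₂ : ∀ v : V₂, inDeg T₂.E v ≤ 1)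
    (hout₁ : ∀ v : V₁, outDeg T₁.E v ≠ 1) (hout₂ : ∀ v : V₂, outDeg T₂.E v ≠ 1) :
    muDist T₁ T₂ = (symmDiff (bipartitions T₁) (bipartitions T₂)).ncard := by
  classical
  have hinj : Function.Injective (fun C : Set (Fin n) => (C, Cᶜ)) := by
    intro C D h
    simpa using congrArg Prod.fst h
  have hfin₁ : (Set.range (cluster T₁)).Finite := Set.finite_range _
  have hfin₂ : (Set.range (cluster T₂)).Finite := Set.finite_range _
  obtain ⟨r₁, hr₁⟩ := exists_cluster_univ T₁
  obtain ⟨r₂, hr₂⟩ := exists_cluster_univ T₂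
  have hm₁ : Set.univ ∈ Set.range (cluster T₁) := Set.mem_range.mpr ⟨r₁, hr₁⟩
  have hm₂ : Set.univ ∈ Set.range (cluster T₂) := Set.mem_range.mpr ⟨r₂, hr₂⟩
  have hRHS : (symmDiff (bipartitions T₁) (bipartitions T₂)).ncard
      = (symmDiff (Set.range (cluster T₁)) (Set.range (cluster T₂))).ncard := by
    rw [bipartitions_eq T₁ htree₁ hout₁, bipartitions_eq T₂ htree₂ hout₂,
      ← Set.image_symmDiff hinj,
      Set.ncard_image_of_injective _ hinj,
      symmDiff_diff_singleton _ _ hm₁ hm₂]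
  rw [muDist, card_multiset_sub_of_nodup (muRep_nodup T₁ htree₁ hout₁),
    card_multiset_sub_of_nodup (muRep_nodup T₂ htree₂ hout₂),
    ← Set.ncard_coe_finset, ← Set.ncard_coe_finset, Finset.coe_sdiff, Finset.coe_sdiff,
    muRep_toFinset_coe T₁ htree₁, muRep_toFinset_coe T₂ htree₂,
    ← Set.image_diff indvec_injective, ← Set.image_diff indvec_injective,
    Set.ncard_image_of_injective _ indvec_injective,
    Set.ncard_image_of_injective _ indvec_injective,
    hRHS, ncard_symmDiff_eq hfin₁ hfin₂]
end

section
/- Let N_1=(V_1,E_1) and N_2=(V_2,E_2) be tree-child phylogenetic networks on the same label set S={ℓ_1,…,ℓ_n}, without out-degree 1 tree nodes, and with |V_1| ≤ |V_2|. A matching M: V_1 → V_2 minimizes the total weight w(M) = Σ_{v∈V_1} ( H(v,M(v)) + χ(v,M(v))/(2n) ) over all matchings if and only if M minimizes the sum Σ_{v ∈ V_1∖V_L} H(v,M(v)) over all matchings and, among the matchings minimizing this sum, M maximizes the number of nodes v with v and M(v) of the same type. -/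
/-- The Manhattan distance between the μ-vectors of two nodes. -/
noncomputable def Hw {V₁ V₂ : Type*} [Fintype V₁] [Fintype V₂] {n : ℕ}
    (N₁ : PhyloNetwork V₁ n) (N₂ : PhyloNetwork V₂ n) (v₁ : V₁) (v₂ : V₂) : ℕ :=
  ∑ i : Fin n, ((mu N₁ v₁ i : ℤ) - (mu N₂ v₂ i : ℤ)).natAbs

/-- Two nodes are of the same type when both are tree nodes or both are hybrid. -/
def SameType {V₁ V₂ : Type*} [Fintype V₁] [Fintype V₂] {n : ℕ}
    (N₁ : PhyloNetwork V₁ n) (N₂ : PhyloNetwork V₂ n) (v₁ : V₁) (v₂ : V₂) : Prop :=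
  (inDeg N₁.E v₁ ≤ 1 ↔ inDeg N₂.E v₂ ≤ 1)

instance {V₁ V₂ : Type*} [Fintype V₁] [Fintype V₂] {n : ℕ}
    (N₁ : PhyloNetwork V₁ n) (N₂ : PhyloNetwork V₂ n) (v₁ : V₁) (v₂ : V₂) :
    Decidable (SameType N₁ N₂ v₁ v₂) :=
  inferInstanceAs (Decidable (_ ↔ _))

/-- `χ(v₁,v₂)` is `0` if the nodes have the same type and `1` otherwise. -/
def chi {V₁ V₂ : Type*} [Fintype V₁] [Fintype V₂] {n : ℕ}
    (N₁ : PhyloNetwork V₁ n) (N₂ : PhyloNetwork V₂ n) (v₁ : V₁) (v₂ : V₂) : ℕ :=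
  if SameType N₁ N₂ v₁ v₂ then 0 else 1

/-- A matching between two networks: an injective map on nodes sending each leaf of
the first network to the leaf of the second with the same label. -/
def IsMatching {V₁ V₂ : Type*} [Fintype V₁] [Fintype V₂] {n : ℕ}
    (N₁ : PhyloNetwork V₁ n) (N₂ : PhyloNetwork V₂ n) (M : V₁ → V₂) : Prop :=
  Function.Injective M ∧ ∀ i, M (N₁.leaf i) = N₂.leaf i

/-- The total weight of a matching: `Σ_v (H(v,M(v)) + χ(v,M(v))/(2n))`. -/
noncomputable def totalWeight {V₁ V₂ : Type*} [Fintype V₁] [Fintype V₂] {n : ℕ}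
    (N₁ : PhyloNetwork V₁ n) (N₂ : PhyloNetwork V₂ n) (M : V₁ → V₂) : ℚ :=
  ∑ v : V₁, ((Hw N₁ N₂ v (M v) : ℚ) + (chi N₁ N₂ v (M v) : ℚ) / (2 * (n : ℚ)))

/-- The sum of the Manhattan distances `H(v,M(v))` over the internal nodes of `N₁`. -/
noncomputable def Hsum {V₁ V₂ : Type*} [Fintype V₁] [Fintype V₂] {n : ℕ}
    (N₁ : PhyloNetwork V₁ n) (N₂ : PhyloNetwork V₂ n) (M : V₁ → V₂) : ℕ :=
  ∑ v ∈ Finset.univ.filter (fun v : V₁ => 0 < outDeg N₁.E v), Hw N₁ N₂ v (M v)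

/-- The number of nodes sent by a matching to nodes of the same type. -/
def sameCount {V₁ V₂ : Type*} [Fintype V₁] [Fintype V₂] {n : ℕ}
    (N₁ : PhyloNetwork V₁ n) (N₂ : PhyloNetwork V₂ n) (M : V₁ → V₂) : ℕ :=
  (Finset.univ.filter (fun v : V₁ => SameType N₁ N₂ v (M v))).card

section Aux
variable {V : Type*} [Fintype V] {n : ℕ}

lemma wf_child (N : PhyloNetwork V n) : WellFounded (fun v u : V => N.E u v = true) := by
  have h1 : IsIrrefl V (Relation.TransGen fun v u : V => N.E u v = true) :=
    ⟨fun a h => N.acyclic a (Relation.transGen_swap.2 h)⟩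
  have h2 : IsTrans V (Relation.TransGen fun v u : V => N.E u v = true) := inferInstance
  have hwf : WellFounded (Relation.TransGen fun v u : V => N.E u v = true) :=
    Finite.wellFounded_of_trans_of_irrefl _
  exact @Subrelation.wf V (Relation.TransGen fun v u : V => N.E u v = true)
    (fun v u => N.E u v = true) (fun h => Relation.TransGen.single h) hwf

lemma exists_sink (N : PhyloNetwork V n) [Nonempty V] : ∃ v : V, outDeg N.E v = 0 := by
  obtain ⟨m, -, hm⟩ := (wf_child N).has_min Set.univ ⟨Classical.arbitrary V, trivial⟩
  refine ⟨m, ?_⟩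
  rw [outDeg, Finset.card_eq_zero, Finset.filter_eq_empty_iff]
  exact fun x _ hx => hm x trivial hx

lemma n_pos (N : PhyloNetwork V n) : 0 < n := by
  obtain ⟨r, hr, -⟩ := N.rooted
  have : Nonempty V := ⟨r⟩
  obtain ⟨v, hv⟩ := exists_sink N
  obtain ⟨i, -⟩ := N.leaf_surj v hv
  exact i.pos

end Aux
section TC
variable {V : Type*} [Fintype V] {n : ℕ}

/-- Chosen tree child of a node (itself if a leaf). -/
noncomputable def tc (N : PhyloNetwork V n) (h : TreeChild N) (u : V) : V :=
  if hu : 0 < outDeg N.E u then Classical.choose (h u hu) else u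

lemma tc_leaf (N : PhyloNetwork V n) (h : TreeChild N) {u : V} (hu : ¬ 0 < outDeg N.E u) :
    tc N h u = u := by simp [tc, hu]

lemma tc_spec (N : PhyloNetwork V n) (h : TreeChild N) {u : V} (hu : 0 < outDeg N.E u) :
    N.E u (tc N h u) = true ∧ inDeg N.E (tc N h u) ≤ 1 := by
  simp only [tc, dif_pos hu]; exact Classical.choose_spec (h u hu)

lemma tc_reaches_leaf (N : PhyloNetwork V n) (h : TreeChild N) (u : V) :
    ∃ k, outDeg N.E ((tc N h)^[k] u) = 0 := by
  induction u using (wf_child N).induction with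
  | _ u IH =>
    by_cases hu : 0 < outDeg N.E u
    · obtain ⟨k, hk⟩ := IH (tc N h u) (tc_spec N h hu).1
      exact ⟨k + 1, by rwa [Function.iterate_succ_apply]⟩
    · exact ⟨0, by simpa using Nat.eq_zero_of_not_pos hu⟩

open Classical in
/-- The leaf label reached from `u` by repeatedly taking tree children. -/
noncomputable def leafIdx (N : PhyloNetwork V n) (h : TreeChild N) (u : V) : Fin n :=
  Classical.choose (N.leaf_surj _ (Nat.find_spec (tc_reaches_leaf N h u)))

open Classical in
lemma leafIdx_spec (N : PhyloNetwork V n) (h : TreeChild N) (u : V) :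
    N.leaf (leafIdx N h u) = (tc N h)^[Nat.find (tc_reaches_leaf N h u)] u :=
  Classical.choose_spec (N.leaf_surj _ (Nat.find_spec (tc_reaches_leaf N h u)))

/-- A node is a source if it is the root or a hybrid node. -/
def IsSource (N : PhyloNetwork V n) (u : V) : Prop :=
  inDeg N.E u = 0 ∨ 1 < inDeg N.E u

lemma not_source_of_child (N : PhyloNetwork V n) {x z : V} (hx : N.E x z = true)
    (hz : inDeg N.E z ≤ 1) : ¬ IsSource N z := by
  have hmem : x ∈ Finset.univ.filter (fun u => N.E u z = true) := by simp [hx]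
  have hpos : 0 < inDeg N.E z := Finset.card_pos.2 ⟨x, hmem⟩
  rintro (h0 | h2) <;> omega

lemma parents_eq (N : PhyloNetwork V n) {x y z : V} (hx : N.E x z = true)
    (hy : N.E y z = true) (hz : inDeg N.E z ≤ 1) : x = y := by
  have hhx : x ∈ Finset.univ.filter (fun u => N.E u z = true) := by simp [hx]
  have hhy : y ∈ Finset.univ.filter (fun u => N.E u z = true) := by simp [hy]
  exact Finset.card_le_one.1 hz x hhx y hhy

lemma meet_inj (N : PhyloNetwork V n) (h : TreeChild N) {u₁ u₂ : V}
    (h1 : IsSource N u₁) (h2 : IsSource N u₂) :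
    ∀ K k m, k + m ≤ K → (tc N h)^[k] u₁ = (tc N h)^[m] u₂ → u₁ = u₂ := by
  intro K
  induction K with
  | zero =>
    intro k m hkm heq
    obtain ⟨rfl, rfl⟩ : k = 0 ∧ m = 0 := by omega
    simpa using heq
  | succ K IH =>
    intro k m hkm heq
    match k, m with
    | 0, 0 => simpa using heq
    | 0, j + 1 =>
      by_cases hyl : 0 < outDeg N.E ((tc N h)^[j] u₂)
      · exfalso
        obtain ⟨he', hd'⟩ := tc_spec N h hyl
        have hu : u₁ = tc N h ((tc N h)^[j] u₂) := by
          simpa [Function.iterate_succ_apply'] using heq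
        exact not_source_of_child N he' hd' (hu ▸ h1)
      · refine IH 0 j (by omega) ?_
        have hfix : (tc N h)^[j + 1] u₂ = (tc N h)^[j] u₂ := by
          rw [Function.iterate_succ_apply', tc_leaf N h hyl]
        simpa [hfix] using heq
    | i + 1, 0 =>
      by_cases hxl : 0 < outDeg N.E ((tc N h)^[i] u₁)
      · exfalso
        obtain ⟨he', hd'⟩ := tc_spec N h hxl
        have hu : u₂ = tc N h ((tc N h)^[i] u₁) := by
          have := heq.symm
          simpa [Function.iterate_succ_apply'] using this
        exact not_source_of_child N he' hd' (hu ▸ h2)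
      · refine IH i 0 (by omega) ?_
        have hfix : (tc N h)^[i + 1] u₁ = (tc N h)^[i] u₁ := by
          rw [Function.iterate_succ_apply', tc_leaf N h hxl]
        simpa [hfix] using heq
    | i + 1, j + 1 =>
      by_cases hxl : 0 < outDeg N.E ((tc N h)^[i] u₁)
      · by_cases hyl : 0 < outDeg N.E ((tc N h)^[j] u₂)
        · obtain ⟨he₁, hd₁⟩ := tc_spec N h hxl
          obtain ⟨he₂, hd₂⟩ := tc_spec N h hyl
          have hzz : tc N h ((tc N h)^[i] u₁) = tc N h ((tc N h)^[j] u₂) := by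
            simpa [Function.iterate_succ_apply'] using heq
          have hxy : (tc N h)^[i] u₁ = (tc N h)^[j] u₂ :=
            parents_eq N he₁ (by rwa [← hzz] at he₂) hd₁
          exact IH i j (by omega) hxy
        · refine IH (i + 1) j (by omega) ?_
          have hfix : (tc N h)^[j + 1] u₂ = (tc N h)^[j] u₂ := by
            rw [Function.iterate_succ_apply', tc_leaf N h hyl]
          simpa [hfix] using heq
      · refine IH i (j + 1) (by omega) ?_
        have hfix : (tc N h)^[i + 1] u₁ = (tc N h)^[i] u₁ := by
          rw [Function.iterate_succ_apply', tc_leaf N h hxl]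
        simpa [hfix] using heq

open Classical in
lemma leafIdx_inj (N : PhyloNetwork V n) (h : TreeChild N) {u₁ u₂ : V}
    (h1 : IsSource N u₁) (h2 : IsSource N u₂)
    (he : leafIdx N h u₁ = leafIdx N h u₂) : u₁ = u₂ := by
  have heq : (tc N h)^[Nat.find (tc_reaches_leaf N h u₁)] u₁
      = (tc N h)^[Nat.find (tc_reaches_leaf N h u₂)] u₂ := by
    rw [← leafIdx_spec, ← leafIdx_spec, he]
  exact meet_inj N h h1 h2 _ _ _ le_rfl heq

end TC
section Count
variable {V : Type*} [Fintype V] {n : ℕ}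

open Classical in
lemma hybrid_card_le (N : PhyloNetwork V n) (h : TreeChild N) :
    (Finset.univ.filter (fun v : V => 1 < inDeg N.E v)).card + 1 ≤ n := by
  classical
  obtain ⟨r, hr, -⟩ := N.rooted
  have hrnot : r ∉ Finset.univ.filter (fun v : V => 1 < inDeg N.E v) := by
    simp [hr]
  have hcard : (insert r (Finset.univ.filter (fun v : V => 1 < inDeg N.E v))).card
      = (Finset.univ.filter (fun v : V => 1 < inDeg N.E v)).card + 1 :=
    Finset.card_insert_of_notMem hrnot
  have hsrc : ∀ u ∈ insert r (Finset.univ.filter (fun v : V => 1 < inDeg N.E v)),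
      IsSource N u := by
    intro u hu
    rcases Finset.mem_insert.1 hu with rfl | hu
    · exact Or.inl hr
    · exact Or.inr (by simpa using hu)
  have hinj : Set.InjOn (leafIdx N h)
      ↑(insert r (Finset.univ.filter (fun v : V => 1 < inDeg N.E v))) := by
    intro a ha b hb hab
    exact leafIdx_inj N h (hsrc a (by simpa using ha)) (hsrc b (by simpa using hb)) hab
  have := Finset.card_le_card_of_injOn (leafIdx N h)
    (fun a _ => Finset.mem_univ _) hinj
  simpa [hcard, Fintype.card_fin] using this

end Count
section Main
variable {V₁ V₂ : Type*} [Fintype V₁] [Fintype V₂] {n : ℕ}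

/-- Number of nodes sent to a node of a different type. -/
def misCount (N₁ : PhyloNetwork V₁ n) (N₂ : PhyloNetwork V₂ n) (M : V₁ → V₂) : ℕ :=
  (Finset.univ.filter (fun v : V₁ => ¬ SameType N₁ N₂ v (M v))).card

lemma mis_add_same (N₁ : PhyloNetwork V₁ n) (N₂ : PhyloNetwork V₂ n) (M : V₁ → V₂) :
    sameCount N₁ N₂ M + misCount N₁ N₂ M = Fintype.card V₁ := by
  rw [sameCount, misCount, ← Finset.card_univ]
  exact Finset.card_filter_add_card_filter_not _

lemma chi_sum (N₁ : PhyloNetwork V₁ n) (N₂ : PhyloNetwork V₂ n) (M : V₁ → V₂) :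
    ∑ v : V₁, chi N₁ N₂ v (M v) = misCount N₁ N₂ M := by
  rw [misCount, Finset.card_eq_sum_ones, Finset.sum_filter]
  apply Finset.sum_congr rfl
  intro v _
  by_cases hv : SameType N₁ N₂ v (M v) <;> simp [chi, hv]

lemma mis_le (N₁ : PhyloNetwork V₁ n) (N₂ : PhyloNetwork V₂ n)
    (h₁ : TreeChild N₁) (h₂ : TreeChild N₂) {M : V₁ → V₂} (hM : IsMatching N₁ N₂ M) :
    misCount N₁ N₂ M + 2 ≤ 2 * n := by
  classical
  have hsub : Finset.univ.filter (fun v : V₁ => ¬ SameType N₁ N₂ v (M v)) ⊆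
      Finset.univ.filter (fun v : V₁ => 1 < inDeg N₁.E v) ∪
      Finset.univ.filter (fun v : V₁ => 1 < inDeg N₂.E (M v)) := by
    intro v hv
    simp only [Finset.mem_filter, Finset.mem_union, Finset.mem_univ, true_and] at hv ⊢
    rw [SameType] at hv
    by_cases hp : inDeg N₁.E v ≤ 1
    · have hq : ¬ inDeg N₂.E (M v) ≤ 1 := fun hq => hv ⟨fun _ => hq, fun _ => hp⟩
      right; omega
    · left; omega
  have hB : (Finset.univ.filter (fun v : V₁ => 1 < inDeg N₂.E (M v))).card ≤
      (Finset.univ.filter (fun v : V₂ => 1 < inDeg N₂.E v)).card := by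
    apply Finset.card_le_card_of_injOn M
    · intro v hv
      simp only [Finset.coe_filter, Finset.mem_filter, Finset.mem_univ, true_and, Set.mem_setOf_eq] at hv ⊢
      exact hv
    · exact fun a _ b _ hab => hM.1 hab
  have h1 := hybrid_card_le N₁ h₁
  have h2 := hybrid_card_le N₂ h₂
  have hle := Finset.card_le_card hsub
  have hun := Finset.card_union_le
    (Finset.univ.filter (fun v : V₁ => 1 < inDeg N₁.E v))
    (Finset.univ.filter (fun v : V₁ => 1 < inDeg N₂.E (M v)))
  rw [misCount]
  omega

lemma totalWeight_eq (N₁ : PhyloNetwork V₁ n) (N₂ : PhyloNetwork V₂ n) (M : V₁ → V₂) :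
    totalWeight N₁ N₂ M =
      (∑ v ∈ Finset.univ.filter (fun v : V₁ => ¬ 0 < outDeg N₁.E v), (Hw N₁ N₂ v (M v) : ℚ))
      + (Hsum N₁ N₂ M : ℚ) + (misCount N₁ N₂ M : ℚ) / (2 * (n : ℚ)) := by
  classical
  have hsplit := Finset.sum_filter_add_sum_filter_not Finset.univ
    (fun v : V₁ => 0 < outDeg N₁.E v) (fun v => (Hw N₁ N₂ v (M v) : ℚ))
  have hchi : ∑ v : V₁, (chi N₁ N₂ v (M v) : ℚ) = (misCount N₁ N₂ M : ℚ) := by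
    rw [← Nat.cast_sum, chi_sum]
  have hH : (Hsum N₁ N₂ M : ℚ)
      = ∑ v ∈ Finset.univ.filter (fun v : V₁ => 0 < outDeg N₁.E v), (Hw N₁ N₂ v (M v) : ℚ) := by
    rw [Hsum]; push_cast; rfl
  rw [totalWeight, Finset.sum_add_distrib, ← Finset.sum_div, hchi, hH, ← hsplit]
  ring

lemma leaf_sum_eq (N₁ : PhyloNetwork V₁ n) (N₂ : PhyloNetwork V₂ n)
    {M M' : V₁ → V₂} (hM : IsMatching N₁ N₂ M) (hM' : IsMatching N₁ N₂ M') :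
    ∑ v ∈ Finset.univ.filter (fun v : V₁ => ¬ 0 < outDeg N₁.E v), (Hw N₁ N₂ v (M v) : ℚ) =
    ∑ v ∈ Finset.univ.filter (fun v : V₁ => ¬ 0 < outDeg N₁.E v), (Hw N₁ N₂ v (M' v) : ℚ) := by
  apply Finset.sum_congr rfl
  intro v hv
  simp only [Finset.mem_filter, Finset.mem_univ, true_and, not_lt, Nat.le_zero] at hv
  obtain ⟨i, rfl⟩ := N₁.leaf_surj v hv
  rw [hM.2 i, hM'.2 i]

end Main
/-- A matching between two tree-child phylogenetic networks (without out-degree 1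
tree nodes, with `|V₁| ≤ |V₂|`) is an optimal alignment (minimizes the total weight)
if and only if it minimizes `Σ_{v internal} H(v,M(v))` over all matchings and, among
the matchings minimizing this sum, it maximizes the number of nodes sent to nodes of
the same type. -/
theorem optimal_alignment_characterization {V₁ V₂ : Type*} [Fintype V₁] [Fintype V₂]
    {n : ℕ} (N₁ : PhyloNetwork V₁ n) (N₂ : PhyloNetwork V₂ n)
    (h₁ : TreeChild N₁) (h₂ : TreeChild N₂)
    (hout₁ : ∀ v : V₁, inDeg N₁.E v ≤ 1 → outDeg N₁.E v ≠ 1)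
    (hout₂ : ∀ v : V₂, inDeg N₂.E v ≤ 1 → outDeg N₂.E v ≠ 1)
    (hcard : Fintype.card V₁ ≤ Fintype.card V₂)
    (M : V₁ → V₂) (hM : IsMatching N₁ N₂ M) :
    (∀ M' : V₁ → V₂, IsMatching N₁ N₂ M' → totalWeight N₁ N₂ M ≤ totalWeight N₁ N₂ M') ↔
    ((∀ M' : V₁ → V₂, IsMatching N₁ N₂ M' → Hsum N₁ N₂ M ≤ Hsum N₁ N₂ M') ∧
     (∀ M' : V₁ → V₂, IsMatching N₁ N₂ M' →
        (∀ M'' : V₁ → V₂, IsMatching N₁ N₂ M'' → Hsum N₁ N₂ M' ≤ Hsum N₁ N₂ M'') →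
        sameCount N₁ N₂ M' ≤ sameCount N₁ N₂ M)) := by

  classical
  have npos : 0 < n := n_pos N₁
  have hden : (0 : ℚ) < 2 * (n : ℚ) := by positivity
  -- difference of total weights of two matchings
  have tw_sub : ∀ A B : V₁ → V₂, IsMatching N₁ N₂ A → IsMatching N₁ N₂ B →
      totalWeight N₁ N₂ A - totalWeight N₁ N₂ B
        = ((Hsum N₁ N₂ A : ℚ) + (misCount N₁ N₂ A : ℚ) / (2 * (n : ℚ)))
          - ((Hsum N₁ N₂ B : ℚ) + (misCount N₁ N₂ B : ℚ) / (2 * (n : ℚ))) := by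
    intro A B hA hB
    rw [totalWeight_eq, totalWeight_eq, leaf_sum_eq N₁ N₂ hA hB]
    ring
  have mis_frac_lt_one : ∀ {A : V₁ → V₂}, IsMatching N₁ N₂ A →
      (misCount N₁ N₂ A : ℚ) / (2 * (n : ℚ)) < 1 := by
    intro A hA
    rw [div_lt_one hden]
    have := mis_le N₁ N₂ h₁ h₂ hA
    push_cast
    exact_mod_cast by omega
  constructor
  · intro hopt
    have hfmin : ∀ M' : V₁ → V₂, IsMatching N₁ N₂ M' → Hsum N₁ N₂ M ≤ Hsum N₁ N₂ M' := by
      intro M' hM'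
      by_contra hlt
      push_neg at hlt
      have h1 : (Hsum N₁ N₂ M' : ℚ) + 1 ≤ (Hsum N₁ N₂ M : ℚ) := by exact_mod_cast hlt
      have h2 := tw_sub M' M hM' hM
      have h3 := mis_frac_lt_one hM'
      have h4 : (0 : ℚ) ≤ (misCount N₁ N₂ M : ℚ) / (2 * (n : ℚ)) := by positivity
      have h5 := hopt M' hM'
      linarith
    refine ⟨hfmin, ?_⟩
    intro M' hM' hmin'
    have heq : Hsum N₁ N₂ M = Hsum N₁ N₂ M' :=
      le_antisymm (hfmin M' hM') (hmin' M hM)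
    have h2 := tw_sub M M' hM hM'
    have h5 := hopt M' hM'
    have heqq : (Hsum N₁ N₂ M : ℚ) = (Hsum N₁ N₂ M' : ℚ) := by exact_mod_cast heq
    have hdiv : (misCount N₁ N₂ M : ℚ) / (2 * (n : ℚ))
        ≤ (misCount N₁ N₂ M' : ℚ) / (2 * (n : ℚ)) := by linarith
    have hmis : misCount N₁ N₂ M ≤ misCount N₁ N₂ M' := by
      have := (div_le_div_iff_of_pos_right hden).1 hdiv
      exact_mod_cast this
    have ha := mis_add_same N₁ N₂ M
    have hb := mis_add_same N₁ N₂ M'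
    omega
  · rintro ⟨hf, hg⟩ M' hM'
    have hsub := tw_sub M M' hM hM'
    rcases le_or_gt (Hsum N₁ N₂ M') (Hsum N₁ N₂ M) with hle | hlt
    · -- equal H-sums; compare mismatch counts
      have heq : Hsum N₁ N₂ M' = Hsum N₁ N₂ M := le_antisymm hle (hf M' hM')
      have hmin' : ∀ M'' : V₁ → V₂, IsMatching N₁ N₂ M'' → Hsum N₁ N₂ M' ≤ Hsum N₁ N₂ M'' :=
        fun M'' hM'' => heq ▸ hf M'' hM''
      have hsc := hg M' hM' hmin'
      have ha := mis_add_same N₁ N₂ M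
      have hb := mis_add_same N₁ N₂ M'
      have hmis : misCount N₁ N₂ M ≤ misCount N₁ N₂ M' := by omega
      have heqq : (Hsum N₁ N₂ M : ℚ) = (Hsum N₁ N₂ M' : ℚ) := by exact_mod_cast heq.symm
      have hdiv : (misCount N₁ N₂ M : ℚ) / (2 * (n : ℚ))
          ≤ (misCount N₁ N₂ M' : ℚ) / (2 * (n : ℚ)) := by
        exact (div_le_div_iff_of_pos_right hden).2 (by exact_mod_cast hmis)
      linarith
    · have h1 : (Hsum N₁ N₂ M : ℚ) + 1 ≤ (Hsum N₁ N₂ M' : ℚ) := by exact_mod_cast hlt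
      have h3 := mis_frac_lt_one hM
      have h4 : (0 : ℚ) ≤ (misCount N₁ N₂ M' : ℚ) / (2 * (n : ℚ)) := by positivity
      linarith
end
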